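/- arXiv:1301.7511 — 6 statements merged into one kernel-verified Lean document; each statement's English description precedes it below -/
import Mathlib

section
/- Let A be a finite set, X ⊆ A, a ∈ A \ X, and set z = ∑_{x ∈ X} (a,x) in K[S_A]. Then b(X ∪ {a}) = b(X)·(1−z) = (1−z)·b(X). -/
open scoped Classical

/-- `bX K Y = ∑_{τ ∈ S_Y} sgn(τ)·τ` in the group algebra `K[S_A]`. -/
noncomputable def bX (K : Type*) [Field K] {A : Type*} [Fintype A] [DecidableEq A]
    (Y : Finset A) : MonoidAlgebra K (Equiv.Perm A) :=
  ∑ τ ∈ Finset.univ.filter (fun τ : Equiv.Perm A => ∀ x ∉ Y, τ x = x),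
    MonoidAlgebra.single τ ((Equiv.Perm.sign τ : ℤ) : K)

section aux

variable {A : Type*} [Fintype A] [DecidableEq A]

lemma mapsto_of_fix {Y : Finset A} {τ : Equiv.Perm A}
    (hτ : ∀ x ∉ Y, τ x = x) {b : A} (hb : b ∈ Y) : τ b ∈ Y := by
  by_contra h
  have h2 : τ b = b := τ.injective (hτ _ h)
  rw [h2] at h; exact h hb

end aux

theorem bX_insert (K : Type*) [Field K] [CharZero K] {A : Type*} [Fintype A] [DecidableEq A]
    (X : Finset A) (a : A) (ha : a ∉ X)
    (z : MonoidAlgebra K (Equiv.Perm A))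
    (hz : z = ∑ x ∈ X, MonoidAlgebra.single (Equiv.swap a x) (1 : K)) :
    bX K (insert a X) = bX K X * (1 - z) ∧ bX K (insert a X) = (1 - z) * bX K X := by
  classical
  set SX : Finset (Equiv.Perm A) :=
    Finset.univ.filter (fun τ : Equiv.Perm A => ∀ x ∉ X, τ x = x) with hSX
  set Sins : Finset (Equiv.Perm A) :=
    Finset.univ.filter (fun τ : Equiv.Perm A => ∀ x ∉ insert a X, τ x = x) with hSins
  have memSX : ∀ τ : Equiv.Perm A, τ ∈ SX ↔ ∀ x ∉ X, τ x = x := by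
    intro τ; simp [hSX]
  have memSins : ∀ τ : Equiv.Perm A, τ ∈ Sins ↔ ∀ x ∉ insert a X, τ x = x := by
    intro τ; simp [hSins]
  -- fixing a within Sins is exactly SX
  have hfix : Sins.filter (fun σ => σ a = a) = SX := by
    ext σ
    simp only [Finset.mem_filter, memSins, memSX]
    constructor
    · rintro ⟨h1, h2⟩ x hx
      by_cases hxa : x = a
      · rw [hxa]; exact h2
      · exact h1 x (by simp [hxa, hx])
    · intro h
      refine ⟨fun x hx => h x (fun hxX => hx (Finset.mem_insert_of_mem hxX)), h a ha⟩
  -- τ ∈ SX fixes a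
  have hfixa : ∀ τ ∈ SX, τ a = a := fun τ hτ => (memSX τ).1 hτ a ha
  -- the "moved" part
  have hXa : ∀ x ∈ X, x ≠ a := fun x hx h => ha (h ▸ hx)
  -- membership: τ * swap a x and swap a x * τ in Sins
  have hmemR : ∀ x ∈ X, ∀ τ ∈ SX, τ * Equiv.swap a x ∈ Sins := by
    intro x hx τ hτ
    rw [memSins]
    intro b hb
    have hba : b ≠ a := fun h => hb (h ▸ Finset.mem_insert_self a X)
    have hbX : b ∉ X := fun h => hb (Finset.mem_insert_of_mem h)
    have hbx : b ≠ x := fun h => hbX (h ▸ hx)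
    simp [Equiv.Perm.mul_apply, Equiv.swap_apply_of_ne_of_ne hba hbx,
      (memSX τ).1 hτ b hbX]
  have hmemL : ∀ x ∈ X, ∀ τ ∈ SX, Equiv.swap a x * τ ∈ Sins := by
    intro x hx τ hτ
    rw [memSins]
    intro b hb
    have hba : b ≠ a := fun h => hb (h ▸ Finset.mem_insert_self a X)
    have hbX : b ∉ X := fun h => hb (Finset.mem_insert_of_mem h)
    have hbx : b ≠ x := fun h => hbX (h ▸ hx)
    simp [Equiv.Perm.mul_apply, (memSX τ).1 hτ b hbX,
      Equiv.swap_apply_of_ne_of_ne hba hbx]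
  -- sign of τ * swap a x
  have hsgn : ∀ x ∈ X, ∀ τ : Equiv.Perm A,
      ((Equiv.Perm.sign (τ * Equiv.swap a x) : ℤ) : K)
        = -((Equiv.Perm.sign τ : ℤ) : K) := by
    intro x hx τ
    rw [Equiv.Perm.sign_mul, Equiv.Perm.sign_swap (Ne.symm (hXa x hx))]
    push_cast
    ring
  have hsgn' : ∀ x ∈ X, ∀ τ : Equiv.Perm A,
      ((Equiv.Perm.sign (Equiv.swap a x * τ) : ℤ) : K)
        = -((Equiv.Perm.sign τ : ℤ) : K) := by
    intro x hx τ
    rw [Equiv.Perm.sign_mul, Equiv.Perm.sign_swap (Ne.symm (hXa x hx))]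
    push_cast
    ring
  -- the split of bX (insert a X)
  have hsplit : bX K (insert a X)
      = bX K X + ∑ σ ∈ Sins.filter (fun σ => ¬ σ a = a),
          MonoidAlgebra.single σ ((Equiv.Perm.sign σ : ℤ) : K) := by
    rw [bX, ← hSins, ← Finset.sum_filter_add_sum_filter_not Sins (fun σ => σ a = a), hfix, bX, ← hSX]
  constructor
  · -- right version
    have hmove : ∑ σ ∈ Sins.filter (fun σ => ¬ σ a = a),
        MonoidAlgebra.single σ ((Equiv.Perm.sign σ : ℤ) : K)
        = ∑ p ∈ X ×ˢ SX, MonoidAlgebra.single (p.2 * Equiv.swap a p.1)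
            ((Equiv.Perm.sign (p.2 * Equiv.swap a p.1) : ℤ) : K) := by
      refine Finset.sum_nbij' (fun σ => (σ⁻¹ a, σ * Equiv.swap a (σ⁻¹ a)))
        (fun p => p.2 * Equiv.swap a p.1) ?_ ?_ ?_ ?_ ?_
      · -- maps into X ×ˢ SX
        intro σ hσ
        simp only [Finset.mem_filter] at hσ
        obtain ⟨hσ1, hσ2⟩ := hσ
        have hinv : σ⁻¹ a ∈ X := by
          by_contra hxX
          by_cases h : σ⁻¹ a = a
          · have h2 := congrArg σ h
            rw [← Equiv.Perm.mul_apply, mul_inv_cancel, Equiv.Perm.one_apply] at h2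
            exact hσ2 h2.symm
          · have : σ⁻¹ a ∉ insert a X := Finset.mem_insert.not.2 (not_or.2 ⟨h, hxX⟩)
            have := (memSins σ).1 hσ1 _ this
            rw [← Equiv.Perm.mul_apply, mul_inv_cancel, Equiv.Perm.one_apply] at this
            exact h this.symm
        refine Finset.mem_product.2 ⟨hinv, ?_⟩
        rw [memSX]
        intro b hb
        by_cases hba : b = a
        · subst hba
          simp [Equiv.Perm.mul_apply, Equiv.swap_apply_left, Equiv.apply_symm_apply]
        · have hbins : b ∉ insert a X := by simp [hba, hb]
          have hbx : b ≠ σ⁻¹ a := fun h => hb (h ▸ hinv)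
          rw [Equiv.Perm.mul_apply, Equiv.swap_apply_of_ne_of_ne hba hbx,
            (memSins σ).1 hσ1 b hbins]
      · -- maps back
        intro p hp
        obtain ⟨hp1, hp2⟩ := Finset.mem_product.1 hp
        refine Finset.mem_filter.2 ⟨hmemR p.1 hp1 p.2 hp2, ?_⟩
        have : (p.2 * Equiv.swap a p.1) a = p.2 p.1 := by
          simp [Equiv.Perm.mul_apply, Equiv.swap_apply_left]
        rw [this]
        intro h
        exact ha (h ▸ mapsto_of_fix ((memSX p.2).1 hp2) hp1)
      · -- left inverse
        intro σ hσ
        show σ * Equiv.swap a (σ⁻¹ a) * Equiv.swap a (σ⁻¹ a) = σ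
        rw [mul_assoc, Equiv.swap_mul_self, mul_one]
      · -- right inverse
        intro p hp
        obtain ⟨hp1, hp2⟩ := Finset.mem_product.1 hp
        have hτa : p.2⁻¹ a = a := by
          conv_lhs => rw [← hfixa p.2 hp2]
          rw [← Equiv.Perm.mul_apply, inv_mul_cancel, Equiv.Perm.one_apply]
        have h1 : (p.2 * Equiv.swap a p.1)⁻¹ a = p.1 := by
          rw [mul_inv_rev, Equiv.Perm.mul_apply, hτa, Equiv.swap_inv, Equiv.swap_apply_left]
        refine Prod.ext h1 ?_
        simp only [h1, mul_assoc, Equiv.swap_mul_self, mul_one]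
      · intro σ hσ
        have h2 : σ * Equiv.swap a (σ⁻¹ a) * Equiv.swap a (σ⁻¹ a) = σ := by
          rw [mul_assoc, Equiv.swap_mul_self, mul_one]
        simp only [h2]
    have hRHS : bX K X * (1 - z) = bX K X - ∑ p ∈ X ×ˢ SX,
        MonoidAlgebra.single (p.2 * Equiv.swap a p.1)
          (-((Equiv.Perm.sign (p.2 * Equiv.swap a p.1) : ℤ) : K)) := by
      rw [mul_sub, mul_one]
      congr 1
      rw [hz, Finset.mul_sum, Finset.sum_product]
      refine Finset.sum_congr rfl fun x hx => ?_
      rw [bX, ← hSX, Finset.sum_mul]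
      refine Finset.sum_congr rfl fun τ hτ => ?_
      rw [MonoidAlgebra.single_mul_single, mul_one, hsgn x hx τ, neg_neg]
    rw [hsplit, hmove, hRHS, sub_eq_add_neg, ← Finset.sum_neg_distrib]
    congr 1
    refine Finset.sum_congr rfl fun p hp => ?_
    rw [← MonoidAlgebra.single_neg, neg_neg]
  · -- left version
    have hmove : ∑ σ ∈ Sins.filter (fun σ => ¬ σ a = a),
        MonoidAlgebra.single σ ((Equiv.Perm.sign σ : ℤ) : K)
        = ∑ p ∈ X ×ˢ SX, MonoidAlgebra.single (Equiv.swap a p.1 * p.2)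
            ((Equiv.Perm.sign (Equiv.swap a p.1 * p.2) : ℤ) : K) := by
      refine Finset.sum_nbij' (fun σ => (σ a, Equiv.swap a (σ a) * σ))
        (fun p => Equiv.swap a p.1 * p.2) ?_ ?_ ?_ ?_ ?_
      · intro σ hσ
        simp only [Finset.mem_filter] at hσ
        obtain ⟨hσ1, hσ2⟩ := hσ
        have hσa : σ a ∈ X := by
          by_contra hxX
          have : σ a ∉ insert a X := by simp [hσ2, hxX]
          have h2 := (memSins σ).1 hσ1 _ this
          exact hσ2 (σ.injective h2)
        refine Finset.mem_product.2 ⟨hσa, ?_⟩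
        rw [memSX]
        intro b hb
        by_cases hba : b = a
        · subst hba
          simp [Equiv.Perm.mul_apply, Equiv.swap_apply_right]
        · have hbins : b ∉ insert a X := by simp [hba, hb]
          have hσb := (memSins σ).1 hσ1 b hbins
          have hbx : b ≠ σ a := fun h => hb (h ▸ hσa)
          simp [Equiv.Perm.mul_apply, hσb, Equiv.swap_apply_of_ne_of_ne hba hbx]
      · intro p hp
        obtain ⟨hp1, hp2⟩ := Finset.mem_product.1 hp
        refine Finset.mem_filter.2 ⟨hmemL p.1 hp1 p.2 hp2, ?_⟩
        have : (Equiv.swap a p.1 * p.2) a = p.1 := by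
          simp [Equiv.Perm.mul_apply, hfixa p.2 hp2, Equiv.swap_apply_left]
        rw [this]
        exact hXa p.1 hp1
      · intro σ hσ
        show Equiv.swap a (σ a) * (Equiv.swap a (σ a) * σ) = σ
        rw [← mul_assoc, Equiv.swap_mul_self, one_mul]
      · intro p hp
        obtain ⟨hp1, hp2⟩ := Finset.mem_product.1 hp
        have h1 : (Equiv.swap a p.1 * p.2) a = p.1 := by
          simp [Equiv.Perm.mul_apply, hfixa p.2 hp2, Equiv.swap_apply_left]
        refine Prod.ext h1 ?_
        simp only [h1, ← mul_assoc, Equiv.swap_mul_self, one_mul]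
      · intro σ hσ
        have h2 : Equiv.swap a (σ a) * (Equiv.swap a (σ a) * σ) = σ := by
          rw [← mul_assoc, Equiv.swap_mul_self, one_mul]
        simp only [h2]
    have hRHS : (1 - z) * bX K X = bX K X - ∑ p ∈ X ×ˢ SX,
        MonoidAlgebra.single (Equiv.swap a p.1 * p.2)
          (-((Equiv.Perm.sign (Equiv.swap a p.1 * p.2) : ℤ) : K)) := by
      rw [sub_mul, one_mul]
      congr 1
      rw [hz, Finset.sum_mul, Finset.sum_product]
      refine Finset.sum_congr rfl fun x hx => ?_
      rw [bX, ← hSX, Finset.mul_sum]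
      refine Finset.sum_congr rfl fun τ hτ => ?_
      rw [MonoidAlgebra.single_mul_single, one_mul, hsgn' x hx τ, neg_neg]
    rw [hsplit, hmove, hRHS, sub_eq_add_neg, ← Finset.sum_neg_distrib]
    congr 1
    refine Finset.sum_congr rfl fun p hp => ?_
    rw [← MonoidAlgebra.single_neg, neg_neg]
end

section
/- Let T be a Young tableau of shape λ with entries a finite set A. If i ≠ j are column indices with λ'_i ≤ λ'_j (λ' the conjugate partition) and a ∈ C_i(T), then the Young symmetrizer satisfies c_λ(T) · (1 − ∑_{x ∈ C_j(T)} (a,x)) = 0 in K[S_A]. -/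
open scoped Classical

/-- The row symmetrizer `a_μ(T) = ∑_{σ ∈ R_T} σ` of a Young tableau `T : D_μ → A`:
the sum of all permutations of `A` which fix every element outside the image of `T`
and map the entries of each row of `T` to entries of the same row. -/
noncomputable def aRow (K : Type*) [Field K] {A : Type*} [Fintype A] [DecidableEq A]
    (μ : YoungDiagram) (T : μ.cells → A) : MonoidAlgebra K (Equiv.Perm A) :=
  ∑ σ ∈ Finset.univ.filter (fun σ : Equiv.Perm A =>
      (∀ x : A, (∀ c : μ.cells, T c ≠ x) → σ x = x) ∧
      ∀ c : μ.cells, ∃ c' : μ.cells, (c' : ℕ × ℕ).1 = (c : ℕ × ℕ).1 ∧ σ (T c) = T c'),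
    MonoidAlgebra.single σ 1

/-- The column antisymmetrizer `b_μ(T) = ∑_{τ ∈ C_T} sgn(τ)·τ` of a Young tableau. -/
noncomputable def bCol (K : Type*) [Field K] {A : Type*} [Fintype A] [DecidableEq A]
    (μ : YoungDiagram) (T : μ.cells → A) : MonoidAlgebra K (Equiv.Perm A) :=
  ∑ τ ∈ Finset.univ.filter (fun τ : Equiv.Perm A =>
      (∀ x : A, (∀ c : μ.cells, T c ≠ x) → τ x = x) ∧
      ∀ c : μ.cells, ∃ c' : μ.cells, (c' : ℕ × ℕ).2 = (c : ℕ × ℕ).2 ∧ τ (T c) = T c'),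
    MonoidAlgebra.single τ ((Equiv.Perm.sign τ : ℤ) : K)

/-- The Young symmetrizer `c_μ(T) = a_μ(T) · b_μ(T)`. -/
noncomputable def youngSymm (K : Type*) [Field K] {A : Type*} [Fintype A] [DecidableEq A]
    (μ : YoungDiagram) (T : μ.cells → A) : MonoidAlgebra K (Equiv.Perm A) :=
  aRow K μ T * bCol K μ T

/-- The set of entries in column `j` of the tableau `T`. -/
noncomputable def colSet {A : Type*} [Fintype A] [DecidableEq A]
    (μ : YoungDiagram) (T : μ.cells → A) (j : ℕ) : Finset A :=
  Finset.univ.filter (fun x : A => ∃ c : μ.cells, (c : ℕ × ℕ).2 = j ∧ T c = x)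

/-- `z_j = ∑_{b ∈ C_j(S)} (a,b)` in the group algebra. -/
noncomputable def zCol (K : Type*) [Field K] {A : Type*} [Fintype A] [DecidableEq A]
    (μ : YoungDiagram) (T : μ.cells → A) (a : A) (j : ℕ) :
    MonoidAlgebra K (Equiv.Perm A) :=
  ∑ b ∈ colSet μ T j, MonoidAlgebra.single (Equiv.swap a b) (1 : K)

/-- `α_μ`: the product of all hook lengths of the Young diagram `μ`. -/
def hookProd (μ : YoungDiagram) : ℕ :=
  ∏ c ∈ μ.cells, (μ.rowLen c.1 - c.2 + (μ.colLen c.2 - c.1) - 1)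


section Aux

open Equiv Finset MonoidAlgebra

variable (K : Type*) [Field K] {A : Type*} [Fintype A] [DecidableEq A]
variable {μ : YoungDiagram}

/-- permutations supported in `X` -/
noncomputable def suppIn (X : Finset A) : Finset (Equiv.Perm A) :=
  Finset.univ.filter (fun σ => ∀ x ∉ X, σ x = x)

@[simp] lemma mem_suppIn {X : Finset A} {σ : Equiv.Perm A} :
    σ ∈ suppIn X ↔ ∀ x ∉ X, σ x = x := by
  simp [suppIn]

/-- signed sum over all permutations supported in `X` -/
noncomputable def signedSum (X : Finset A) : MonoidAlgebra K (Equiv.Perm A) :=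
  ∑ σ ∈ suppIn X, MonoidAlgebra.single σ ((Equiv.Perm.sign σ : ℤ) : K)

lemma suppIn_mul {X : Finset A} {σ τ : Equiv.Perm A} (hσ : σ ∈ suppIn X)
    (hτ : τ ∈ suppIn X) : σ * τ ∈ suppIn X := by
  simp only [mem_suppIn] at *
  intro x hx
  rw [Equiv.Perm.mul_apply, hτ x hx, hσ x hx]

lemma suppIn_inv {X : Finset A} {σ : Equiv.Perm A} (hσ : σ ∈ suppIn X) :
    σ⁻¹ ∈ suppIn X := by
  simp only [mem_suppIn] at *
  intro x hx
  conv_lhs => rw [← hσ x hx]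
  simp

end Aux

section Tab

open Equiv Finset MonoidAlgebra

variable (K : Type*) [Field K] {A : Type*} [Fintype A] [DecidableEq A]
variable {μ : YoungDiagram} (T : μ.cells → A)

def IsRowP (σ : Equiv.Perm A) : Prop :=
  (∀ x : A, (∀ c : μ.cells, T c ≠ x) → σ x = x) ∧
  ∀ c : μ.cells, ∃ c' : μ.cells, (c' : ℕ × ℕ).1 = (c : ℕ × ℕ).1 ∧ σ (T c) = T c'

def IsColP (σ : Equiv.Perm A) : Prop :=
  (∀ x : A, (∀ c : μ.cells, T c ≠ x) → σ x = x) ∧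
  ∀ c : μ.cells, ∃ c' : μ.cells, (c' : ℕ × ℕ).2 = (c : ℕ × ℕ).2 ∧ σ (T c) = T c'

lemma aRow_eq : aRow K μ T = ∑ σ ∈ Finset.univ.filter (IsRowP T),
    MonoidAlgebra.single σ 1 := by
  unfold aRow IsRowP
  congr!

lemma bCol_eq : bCol K μ T = ∑ τ ∈ Finset.univ.filter (IsColP T),
    MonoidAlgebra.single τ ((Equiv.Perm.sign τ : ℤ) : K) := by
  unfold bCol IsColP
  congr!

variable {T}

lemma IsRowP.mul {σ τ : Equiv.Perm A} (hσ : IsRowP T σ) (hτ : IsRowP T τ) :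
    IsRowP T (σ * τ) := by
  constructor
  · intro x hx
    rw [Equiv.Perm.mul_apply, hτ.1 x hx, hσ.1 x hx]
  · intro c
    obtain ⟨c', hc'1, hc'2⟩ := hτ.2 c
    obtain ⟨c'', hc''1, hc''2⟩ := hσ.2 c'
    exact ⟨c'', by rw [hc''1, hc'1], by rw [Equiv.Perm.mul_apply, hc'2, hc''2]⟩

lemma IsColP.mul {σ τ : Equiv.Perm A} (hσ : IsColP T σ) (hτ : IsColP T τ) :
    IsColP T (σ * τ) := by
  constructor
  · intro x hx
    rw [Equiv.Perm.mul_apply, hτ.1 x hx, hσ.1 x hx]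
  · intro c
    obtain ⟨c', hc'1, hc'2⟩ := hτ.2 c
    obtain ⟨c'', hc''1, hc''2⟩ := hσ.2 c'
    exact ⟨c'', by rw [hc''1, hc'1], by rw [Equiv.Perm.mul_apply, hc'2, hc''2]⟩

/-- a transposition of two same-row entries is a row permutation -/
lemma isRowP_swap (hT : Function.Injective T) {c1 c2 : μ.cells}
    (hrow : (c1 : ℕ × ℕ).1 = (c2 : ℕ × ℕ).1) :
    IsRowP T (Equiv.swap (T c1) (T c2)) := by
  constructor
  · intro x hx
    exact Equiv.swap_apply_of_ne_of_ne (fun h => hx c1 h.symm) (fun h => hx c2 h.symm)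
  · intro c
    by_cases h1 : T c = T c1
    · refine ⟨c2, ?_, ?_⟩
      · rw [← hrow, hT h1]
      · rw [h1, Equiv.swap_apply_left]
    by_cases h2 : T c = T c2
    · refine ⟨c1, ?_, ?_⟩
      · rw [hrow, hT h2]
      · rw [h2, Equiv.swap_apply_right]
    · exact ⟨c, rfl, Equiv.swap_apply_of_ne_of_ne h1 h2⟩

/-- `aRow` absorbs a same-row transposition on the right. -/
lemma aRow_mul_swap (hT : Function.Injective T) {c1 c2 : μ.cells}
    (hrow : (c1 : ℕ × ℕ).1 = (c2 : ℕ × ℕ).1) :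
    aRow K μ T * MonoidAlgebra.single (Equiv.swap (T c1) (T c2)) (1 : K) = aRow K μ T := by
  set t := Equiv.swap (T c1) (T c2) with ht
  have htr : IsRowP T t := isRowP_swap hT hrow
  rw [aRow_eq, Finset.sum_mul]
  simp only [MonoidAlgebra.single_mul_single, mul_one]
  apply Finset.sum_equiv (Equiv.mulRight t)
  · intro σ
    simp only [Finset.mem_filter, Finset.mem_univ, true_and, Equiv.coe_mulRight]
    constructor
    · intro hσ; exact hσ.mul htr
    · intro hσ
      have := hσ.mul htr
      rwa [mul_assoc, ht, Equiv.swap_mul_self, mul_one] at this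
  · intro σ _; rfl

/-- conjugation moves a signed sum across `single τ`. -/
lemma single_mul_signedSum (τ : Equiv.Perm A) (X : Finset A) :
    MonoidAlgebra.single τ (1 : K) * signedSum K X
      = signedSum K (X.image τ) * MonoidAlgebra.single τ (1 : K) := by
  simp only [signedSum]
  rw [Finset.mul_sum, Finset.sum_mul]
  simp only [MonoidAlgebra.single_mul_single, one_mul, mul_one]
  apply Finset.sum_equiv ((Equiv.mulLeft τ).trans (Equiv.mulRight τ⁻¹))
  · intro σ
    simp only [mem_suppIn, Equiv.trans_apply, Equiv.coe_mulLeft, Equiv.coe_mulRight]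
    constructor
    · intro hσ y hy
      have hy' : τ⁻¹ y ∉ X := by
        intro h
        exact hy (Finset.mem_image.2 ⟨τ⁻¹ y, h, by simp⟩)
      simpa [Equiv.Perm.mul_apply] using congrArg τ (hσ _ hy')
    · intro hσ x hx
      have hx' : τ x ∉ X.image τ := by
        intro h
        obtain ⟨x', hx'', he⟩ := Finset.mem_image.1 h
        exact hx (by rwa [τ.injective he] at hx'')
      have := hσ _ hx'
      simp only [Equiv.Perm.mul_apply] at this
      rw [show τ⁻¹ (τ x) = x from Equiv.symm_apply_apply τ x] at this
      exact τ.injective this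
  · intro σ hσ
    simp only [Equiv.trans_apply, Equiv.coe_mulLeft, Equiv.coe_mulRight]
    have h1 : τ * σ * τ⁻¹ * τ = τ * σ := by group
    have h2 : Equiv.Perm.sign (τ * σ * τ⁻¹) = Equiv.Perm.sign σ := by
      simp only [map_mul, map_inv]
      rw [mul_comm (Equiv.Perm.sign τ), mul_assoc, mul_inv_cancel, mul_one]
    rw [h1, h2]

/-- left multiplication by a swap inside `X` negates the signed sum. -/
lemma swap_mul_signedSum {p q : A} (hpq : p ≠ q) {X : Finset A}
    (hp : p ∈ X) (hq : q ∈ X) :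
    MonoidAlgebra.single (Equiv.swap p q) (1 : K) * signedSum K X = - signedSum K X := by
  set t := Equiv.swap p q with ht
  have htX : t ∈ suppIn X := by
    simp only [mem_suppIn]
    intro x hx
    exact Equiv.swap_apply_of_ne_of_ne (fun h => hx (h ▸ hp)) (fun h => hx (h ▸ hq))
  simp only [signedSum]
  rw [Finset.mul_sum, ← Finset.sum_neg_distrib]
  simp only [MonoidAlgebra.single_mul_single, one_mul]
  apply Finset.sum_equiv (Equiv.mulLeft t)
  · intro σ
    simp only [Equiv.coe_mulLeft]
    constructor
    · intro hσ; exact suppIn_mul htX hσ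
    · intro hσ
      have := suppIn_mul (suppIn_inv htX) hσ
      rwa [← mul_assoc, ht, Equiv.swap_inv, Equiv.swap_mul_self, one_mul] at this
  · intro σ _
    simp only [Equiv.coe_mulLeft]
    have hs : ((Equiv.Perm.sign (t * σ) : ℤ) : K) = -((Equiv.Perm.sign σ : ℤ) : K) := by
      rw [map_mul, ht, Equiv.Perm.sign_swap hpq]
      push_cast
      ring
    rw [hs]
    simp

/-- Key kill lemma: if `X` contains two distinct entries from the same row of `T`,
then `aRow * signedSum X = 0`. -/
lemma aRow_mul_signedSum_eq_zero [CharZero K] (hT : Function.Injective T)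
    {X : Finset A} {c1 c2 : μ.cells} (hrow : (c1 : ℕ × ℕ).1 = (c2 : ℕ × ℕ).1)
    (hne : T c1 ≠ T c2) (h1 : T c1 ∈ X) (h2 : T c2 ∈ X) :
    aRow K μ T * signedSum K X = 0 := by
  set M := aRow K μ T * signedSum K X with hM
  have key : M = - M := by
    conv_lhs => rw [hM, ← aRow_mul_swap K hT hrow, mul_assoc,
      swap_mul_signedSum K hne h1 h2, mul_neg]
  have h2M : (2 : K) • M = 0 := by
    rw [two_smul]
    nth_rewrite 1 [key]
    simp
  rcases smul_eq_zero.1 h2M with h | h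
  · exact absurd h two_ne_zero
  · exact h

end Tab

section Tab2

open Equiv Finset MonoidAlgebra

variable (K : Type*) [Field K] {A : Type*} [Fintype A] [DecidableEq A]
variable {μ : YoungDiagram} {T : μ.cells → A}

lemma mem_colSet {j : ℕ} {x : A} :
    x ∈ colSet μ T j ↔ ∃ c : μ.cells, (c : ℕ × ℕ).2 = j ∧ T c = x := by
  simp [colSet]

lemma suppIn_maps {X : Finset A} {τ : Equiv.Perm A} (hτ : τ ∈ suppIn X)
    {y : A} (hy : y ∈ X) : τ y ∈ X := by
  by_contra h
  have h2 := mem_suppIn.1 hτ (τ y) h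
  have : τ y = y := τ.injective h2
  rw [this] at h
  exact h hy

lemma suppIn_isColP (hT : Function.Injective T) {j : ℕ} {τ : Equiv.Perm A}
    (hτ : τ ∈ suppIn (colSet μ T j)) : IsColP T τ := by
  constructor
  · intro x hx
    refine mem_suppIn.1 hτ x ?_
    intro hmem
    obtain ⟨c, _, hc⟩ := mem_colSet.1 hmem
    exact hx c hc
  · intro c
    by_cases h : T c ∈ colSet μ T j
    · obtain ⟨c'', hc''j, hc''T⟩ := mem_colSet.1 h
      have hcj : (c : ℕ × ℕ).2 = j := by rw [← hc''j, hT hc''T]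
      have : τ (T c) ∈ colSet μ T j := suppIn_maps hτ h
      obtain ⟨c', hc'j, hc'T⟩ := mem_colSet.1 this
      exact ⟨c', by rw [hc'j, hcj], hc'T.symm⟩
    · refine ⟨c, rfl, ?_⟩
      refine mem_suppIn.1 hτ _ ?_
      exact h

lemma IsColP.image_colSet (hT : Function.Injective T) {τ : Equiv.Perm A}
    (hτ : IsColP T τ) (j : ℕ) : (colSet μ T j).image τ = colSet μ T j := by
  apply Finset.eq_of_subset_of_card_le
  · intro y hy
    obtain ⟨x, hx, rfl⟩ := Finset.mem_image.1 hy
    obtain ⟨c, hcj, rfl⟩ := mem_colSet.1 hx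
    obtain ⟨c', hc'j, hc'T⟩ := hτ.2 c
    exact mem_colSet.2 ⟨c', by rw [hc'j, hcj], hc'T.symm⟩
  · rw [Finset.card_image_of_injective _ τ.injective]

lemma bCol_mul_single (hT : Function.Injective T) {j : ℕ} {τ' : Equiv.Perm A}
    (hτ' : τ' ∈ suppIn (colSet μ T j)) :
    bCol K μ T * MonoidAlgebra.single τ' ((Equiv.Perm.sign τ' : ℤ) : K) = bCol K μ T := by
  have hc : IsColP T τ' := suppIn_isColP hT hτ'
  rw [bCol_eq, Finset.sum_mul]
  simp only [MonoidAlgebra.single_mul_single]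
  apply Finset.sum_equiv (Equiv.mulRight τ')
  · intro σ
    simp only [Finset.mem_filter, Finset.mem_univ, true_and, Equiv.coe_mulRight]
    constructor
    · intro hσ; exact hσ.mul hc
    · intro hσ
      have hinv : IsColP T τ'⁻¹ := suppIn_isColP hT (suppIn_inv hτ')
      have := hσ.mul hinv
      rwa [mul_assoc, mul_inv_cancel, mul_one] at this
  · intro σ _
    simp only [Equiv.coe_mulRight]
    congr 1
    rw [map_mul]
    push_cast
    ring

lemma bCol_mul_signedSum (hT : Function.Injective T) (j : ℕ) :
    bCol K μ T * signedSum K (colSet μ T j)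
      = (suppIn (colSet μ T j) : Finset (Equiv.Perm A)).card • bCol K μ T := by
  rw [signedSum, Finset.mul_sum]
  rw [Finset.sum_congr rfl (fun τ' hτ' => bCol_mul_single K hT hτ')]
  rw [Finset.sum_const]

lemma signedSum_insert (a : A) (X : Finset A) (ha : a ∉ X) :
    signedSum K (insert a X)
      = signedSum K X
        * (1 - ∑ x ∈ X, MonoidAlgebra.single (Equiv.swap a x) (1 : K)) := by
  have h2 : ∀ x ∈ X,
      MonoidAlgebra.single (Equiv.swap a x) ((Equiv.Perm.sign (Equiv.swap a x) : ℤ) : K)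
        = - MonoidAlgebra.single (Equiv.swap a x) (1 : K) := by
    intro x hx
    have hax : a ≠ x := fun h => ha (h ▸ hx)
    rw [Equiv.Perm.sign_swap hax]
    simp
  have h1 : (1 : MonoidAlgebra K (Equiv.Perm A))
        - ∑ x ∈ X, MonoidAlgebra.single (Equiv.swap a x) (1 : K)
      = ∑ x ∈ insert a X,
          MonoidAlgebra.single (Equiv.swap a x) ((Equiv.Perm.sign (Equiv.swap a x) : ℤ) : K) := by
    rw [Finset.sum_insert ha, Finset.sum_congr rfl h2, Finset.sum_neg_distrib]
    have h3 : MonoidAlgebra.single (Equiv.swap a a)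
        ((Equiv.Perm.sign (Equiv.swap a a) : ℤ) : K) = 1 := by
      rw [Equiv.swap_self]
      simp [MonoidAlgebra.one_def]
      rfl
    rw [h3, sub_eq_add_neg]
  rw [h1]
  simp only [signedSum]
  rw [Finset.sum_mul_sum, ← Finset.sum_product']
  simp only [MonoidAlgebra.single_mul_single]
  apply Finset.sum_nbij'
    (i := fun σ => (σ * Equiv.swap a (σ⁻¹ a), σ⁻¹ a))
    (j := fun p => p.1 * Equiv.swap a p.2)
  · intro σ hσ
    have hx0 : σ⁻¹ a ∈ insert a X := by
      by_contra h
      have h4 := mem_suppIn.1 hσ _ h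
      rw [show σ (σ⁻¹ a) = a from Equiv.apply_symm_apply σ a] at h4
      rw [← h4] at h
      exact h (Finset.mem_insert_self a X)
    rw [Finset.mem_product]
    refine ⟨?_, hx0⟩
    rw [mem_suppIn]
    intro y hy
    by_cases hya : y = a
    · subst hya
      rw [Equiv.Perm.mul_apply, Equiv.swap_apply_left, show σ (σ⁻¹ y) = y from Equiv.apply_symm_apply σ y]
    · have hyi : y ∉ insert a X := by
        simp only [Finset.mem_insert, not_or]
        exact ⟨hya, hy⟩
      have hyx0 : y ≠ σ⁻¹ a := fun h => hyi (h ▸ hx0)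
      rw [Equiv.Perm.mul_apply, Equiv.swap_apply_of_ne_of_ne hya hyx0]
      exact mem_suppIn.1 hσ y hyi
  · intro p hp
    rw [Finset.mem_product] at hp
    rw [mem_suppIn]
    intro y hy
    simp only [Finset.mem_insert, not_or] at hy
    have hyx : y ≠ p.2 := by
      intro h
      rcases Finset.mem_insert.1 hp.2 with h' | h'
      · exact hy.1 (h.trans h')
      · exact hy.2 (h ▸ h')
    rw [Equiv.Perm.mul_apply, Equiv.swap_apply_of_ne_of_ne hy.1 hyx]
    exact mem_suppIn.1 hp.1 y hy.2
  · intro σ hσ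
    simp only
    rw [mul_assoc, Equiv.swap_mul_self, mul_one]
  · intro p hp
    rw [Finset.mem_product] at hp
    have ha' : p.1 a = a := by
      refine mem_suppIn.1 hp.1 a ha
    have hinva : (p.1 * Equiv.swap a p.2)⁻¹ a = p.2 := by
      rw [mul_inv_rev, Equiv.Perm.mul_apply]
      have : p.1⁻¹ a = a := by
        conv_lhs => rw [← ha']
        simp
      rw [this, Equiv.swap_inv, Equiv.swap_apply_left]
    ext y
    · simp only
      rw [hinva, mul_assoc, Equiv.swap_mul_self, mul_one]
    · simp only
      rw [hinva]
  · intro σ hσ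
    simp only
    have hσ' : σ * Equiv.swap a (σ⁻¹ a) * Equiv.swap a (σ⁻¹ a) = σ := by
      rw [mul_assoc, Equiv.swap_mul_self, mul_one]
    have hs : ((Equiv.Perm.sign (σ * Equiv.swap a (σ⁻¹ a)) : ℤ) : K)
        * ((Equiv.Perm.sign (Equiv.swap a (σ⁻¹ a)) : ℤ) : K)
        = ((Equiv.Perm.sign σ : ℤ) : K) := by
      rw [← Int.cast_mul, ← Units.val_mul, ← map_mul, hσ']
    rw [hσ', hs]

end Tab2

section Main

open Equiv Finset MonoidAlgebra

variable (K : Type*) [Field K] {A : Type*} [Fintype A] [DecidableEq A]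

/-- Kill step: `youngSymm * signedSum (insert a (colSet j)) = 0`. -/
lemma youngSymm_mul_signedSum [CharZero K] {l : YoungDiagram} {T : l.cells → A}
    (hT : Function.Injective T) {i j : ℕ} (hij : i ≠ j) (hcol : l.colLen i ≤ l.colLen j)
    {a : A} {ca : l.cells} (hcai : (ca : ℕ × ℕ).2 = i) (hcaT : T ca = a) :
    youngSymm K l T * signedSum K (insert a (colSet l T j)) = 0 := by
  rw [youngSymm, mul_assoc, bCol_eq, Finset.sum_mul, Finset.mul_sum]
  apply Finset.sum_eq_zero
  intro τ hτ
  have hτc : IsColP T τ := (Finset.mem_filter.1 hτ).2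
  have e1 : (MonoidAlgebra.single τ ((Equiv.Perm.sign τ : ℤ) : K))
      = ((Equiv.Perm.sign τ : ℤ) : K) • MonoidAlgebra.single τ (1 : K) := by
    rw [MonoidAlgebra.smul_single', mul_one]
  rw [e1, smul_mul_assoc, single_mul_signedSum, Finset.image_insert,
    hτc.image_colSet hT j]
  -- pair in the same row
  obtain ⟨c', hc'col, hc'T⟩ := hτc.2 ca
  have hc'i : (c' : ℕ × ℕ).2 = i := by rw [hc'col, hcai]
  have hmem : ((c' : ℕ × ℕ).1, (c' : ℕ × ℕ).2) ∈ l := by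
    have := c'.2
    rw [YoungDiagram.mem_cells] at this
    simpa using this
  have hlt : (c' : ℕ × ℕ).1 < l.colLen j := by
    rw [YoungDiagram.mem_iff_lt_colLen, hc'i] at hmem
    exact lt_of_lt_of_le hmem hcol
  have hcqmem : ((c' : ℕ × ℕ).1, j) ∈ l.cells := by
    rw [YoungDiagram.mem_cells, YoungDiagram.mem_iff_lt_colLen]
    exact hlt
  set cq : l.cells := ⟨((c' : ℕ × ℕ).1, j), hcqmem⟩ with hcq
  have hqX : T cq ∈ colSet l T j := mem_colSet.2 ⟨cq, rfl, rfl⟩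
  have hpins : T c' ∈ insert (τ a) (colSet l T j) := by
    have : τ a = T c' := by rw [← hcaT, hc'T]
    rw [this]
    exact Finset.mem_insert_self _ _
  have hqins : T cq ∈ insert (τ a) (colSet l T j) :=
    Finset.mem_insert_of_mem hqX
  have hne : T c' ≠ T cq := by
    intro h
    have : c' = cq := hT h
    apply hij
    rw [← hc'i, this]
  have hrow : (c' : ℕ × ℕ).1 = (cq : ℕ × ℕ).1 := rfl
  have hkill : aRow K l T * signedSum K (insert (τ a) (colSet l T j)) = 0 :=
    aRow_mul_signedSum_eq_zero K hT hrow hne hpins hqins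
  rw [mul_smul_comm, ← mul_assoc, hkill, zero_mul, smul_zero]

end Main

/-- Garnir relation: if `λ'_i ≤ λ'_j`, `i ≠ j` and `a` lies in column `i`
of `T`, then `c_λ(T) · (1 − ∑_{x ∈ C_j(T)} (a,x)) = 0`. -/
theorem garnir (K : Type*) [Field K] [CharZero K] {A : Type*} [Fintype A]
    [DecidableEq A] (l : YoungDiagram) (T : l.cells → A) (hT : Function.Bijective T)
    (i j : ℕ) (hij : i ≠ j) (hcol : l.colLen i ≤ l.colLen j) (a : A)
    (ha : a ∈ colSet l T i) :
    youngSymm K l T * (1 - ∑ x ∈ colSet l T j, MonoidAlgebra.single (Equiv.swap a x) (1 : K))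
      = 0 := by
  classical
  have hTi : Function.Injective T := hT.1
  obtain ⟨ca, hcai, hcaT⟩ := mem_colSet.1 ha
  have haX : a ∉ colSet l T j := by
    intro h
    obtain ⟨c, hcj, hcT⟩ := mem_colSet.1 h
    apply hij
    rw [← hcai, ← hcj]
    congr 1
    exact congrArg _ (hTi (hcaT.trans hcT.symm))
  set R : MonoidAlgebra K (Equiv.Perm A) :=
    1 - ∑ x ∈ colSet l T j, MonoidAlgebra.single (Equiv.swap a x) (1 : K) with hR
  have hfac := signedSum_insert K a (colSet l T j) haX
  have habs := bCol_mul_signedSum K hTi (μ := l) (T := T) j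
  have hP0 := youngSymm_mul_signedSum K hTi hij hcol hcai hcaT
  set N := (suppIn (colSet l T j) : Finset (Equiv.Perm A)).card with hN
  have hNne : N ≠ 0 := by
    apply Finset.card_ne_zero_of_mem (a := 1)
    simp [mem_suppIn]
  have h1 : youngSymm K l T * signedSum K (colSet l T j) = N • youngSymm K l T := by
    rw [youngSymm, mul_assoc, habs, mul_smul_comm, ← youngSymm]
  have key : N • (youngSymm K l T * R) = 0 := by
    calc N • (youngSymm K l T * R)
        = (N • youngSymm K l T) * R := by rw [smul_mul_assoc]
      _ = youngSymm K l T * signedSum K (colSet l T j) * R := by rw [h1]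
      _ = youngSymm K l T * (signedSum K (colSet l T j) * R) := by rw [mul_assoc]
      _ = youngSymm K l T * signedSum K (insert a (colSet l T j)) := by rw [← hfac]
      _ = 0 := hP0
  rw [← Nat.cast_smul_eq_nsmul K] at key
  rcases smul_eq_zero.1 key with h | h
  · exact absurd (Nat.cast_eq_zero.1 h) hNne
  · exact h
end

section
/- Let S be a Young tableau of shape μ with entries in a finite set A₀, and a ∉ A₀. For a column index i, let z_i = ∑_{b ∈ C_i(S)} (a,b). Then c_μ(S) · z_i² = c_μ(S) · (μ'_i − (μ'_i − 1)·z_i), where μ'_i = |C_i(S)| is the length of column i. -/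
open scoped Classical

section Aux
variable {K : Type*} [Field K] {A : Type*} [Fintype A] [DecidableEq A]
  {μ : YoungDiagram} {T : μ.cells → A}

/-- The column group of `T`, as a finset of permutations. -/
private noncomputable def colF (μ : YoungDiagram) (T : μ.cells → A) :
    Finset (Equiv.Perm A) :=
  Finset.univ.filter (fun τ : Equiv.Perm A =>
      (∀ x : A, (∀ c : μ.cells, T c ≠ x) → τ x = x) ∧
      ∀ c : μ.cells, ∃ c' : μ.cells, (c' : ℕ × ℕ).2 = (c : ℕ × ℕ).2 ∧ τ (T c) = T c')

private lemma colF_mul {σ τ : Equiv.Perm A} (hσ : σ ∈ colF μ T) (hτ : τ ∈ colF μ T) :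
    σ * τ ∈ colF μ T := by
  simp only [colF, Finset.mem_filter, Finset.mem_univ, true_and] at *
  refine ⟨fun x hx => ?_, fun c => ?_⟩
  · simp [Equiv.Perm.mul_apply, hτ.1 x hx, hσ.1 x hx]
  · obtain ⟨c', hc', hTc'⟩ := hτ.2 c
    obtain ⟨c'', hc'', hTc''⟩ := hσ.2 c'
    exact ⟨c'', hc''.trans hc', by simp [Equiv.Perm.mul_apply, hTc', hTc'']⟩

private lemma swap_mem_colF (hT : Function.Injective T) {i : ℕ} {b b' : A}
    (hb : b ∈ colSet μ T i) (hb' : b' ∈ colSet μ T i) :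
    Equiv.swap b b' ∈ colF μ T := by
  simp only [colSet, Finset.mem_filter, Finset.mem_univ, true_and] at hb hb'
  obtain ⟨cb, hcb, rfl⟩ := hb
  obtain ⟨cb', hcb', rfl⟩ := hb'
  refine Finset.mem_filter.2 ⟨Finset.mem_univ _, fun x hx =>
    Equiv.swap_apply_of_ne_of_ne (hx cb).symm (hx cb').symm, fun c => ?_⟩
  by_cases h1 : T c = T cb
  · exact ⟨cb', hcb'.trans (by rw [hT h1, hcb]), by rw [h1, Equiv.swap_apply_left]⟩
  by_cases h2 : T c = T cb'
  · exact ⟨cb, hcb.trans (by rw [hT h2, hcb']), by rw [h2, Equiv.swap_apply_right]⟩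
  · exact ⟨c, rfl, Equiv.swap_apply_of_ne_of_ne h1 h2⟩

private lemma bCol_eq_sum_colF :
    bCol K μ T = ∑ τ ∈ colF μ T,
      MonoidAlgebra.single τ ((Equiv.Perm.sign τ : ℤ) : K) := rfl

private lemma bCol_mul_swap (hT : Function.Injective T) {i : ℕ} {b b' : A}
    (hb : b ∈ colSet μ T i) (hb' : b' ∈ colSet μ T i) (hbb : b ≠ b') :
    bCol K μ T * MonoidAlgebra.single (Equiv.swap b b') (1 : K) = - bCol K μ T := by
  have hs := swap_mem_colF hT hb hb'
  rw [bCol_eq_sum_colF, Finset.sum_mul, ← Finset.sum_neg_distrib]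
  refine Finset.sum_nbij' (fun τ => τ * Equiv.swap b b') (fun τ => τ * Equiv.swap b b')
    (fun τ hτ => colF_mul hτ hs) (fun τ hτ => colF_mul hτ hs)
    (fun τ _ => by simp [mul_assoc]) (fun τ _ => by simp [mul_assoc])
    (fun τ hτ => ?_)
  rw [MonoidAlgebra.single_mul_single, mul_one, ← MonoidAlgebra.single_neg]
  congr 1
  simp [Equiv.Perm.sign_mul, Equiv.Perm.sign_swap hbb]

private lemma youngSymm_mul_swap (hT : Function.Injective T) {i : ℕ} {b b' : A}
    (hb : b ∈ colSet μ T i) (hb' : b' ∈ colSet μ T i) (hbb : b ≠ b') :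
    youngSymm K μ T * MonoidAlgebra.single (Equiv.swap b b') (1 : K)
      = - youngSymm K μ T := by
  rw [youngSymm, mul_assoc, bCol_mul_swap hT hb hb' hbb, mul_neg]

private lemma card_colSet (hT : Function.Injective T) (i : ℕ) :
    (colSet μ T i).card = μ.colLen i := by
  have h1 : colSet μ T i =
      (Finset.univ.filter (fun c : μ.cells => (c : ℕ × ℕ).2 = i)).image T := by
    ext x
    simp only [colSet, Finset.mem_filter, Finset.mem_univ, true_and, Finset.mem_image]
  rw [h1, Finset.card_image_of_injective _ hT, μ.colLen_eq_card (j := i)]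
  refine Finset.card_bij (fun c _ => (c : ℕ × ℕ)) ?_ ?_ ?_
  · rintro c hc
    simp only [Finset.mem_filter, Finset.mem_univ, true_and] at hc
    exact YoungDiagram.mem_col_iff.2 ⟨c.2, hc⟩
  · intro c₁ _ c₂ _ h; exact Subtype.ext h
  · rintro p hp
    rw [YoungDiagram.mem_col_iff] at hp
    exact ⟨⟨p, hp.1⟩, by simp [hp.2], rfl⟩

omit [Fintype A] in
private lemma swap_swap_eq {a b b' : A} (hab : a ≠ b) (hab' : a ≠ b') (hbb : b ≠ b') :
    Equiv.swap a b * Equiv.swap a b' = Equiv.swap b b' * Equiv.swap a b := by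
  ext x
  simp only [Equiv.Perm.mul_apply, Equiv.swap_apply_def]
  split_ifs <;> simp_all

end Aux

/-- `c_μ(S)·z_i² = c_μ(S)·(μ'_i − (μ'_i−1)·z_i)`. -/
theorem youngSymm_zi_sq (K : Type*) [Field K] [CharZero K] {A : Type*} [Fintype A]
    [DecidableEq A] (μ : YoungDiagram) (S : μ.cells → A) (hS : Function.Injective S)
    (a : A) (ha : ∀ c : μ.cells, S c ≠ a) (i : ℕ) :
    youngSymm K μ S * (zCol K μ S a i * zCol K μ S a i)
      = youngSymm K μ S *
          ((μ.colLen i : K) • (1 : MonoidAlgebra K (Equiv.Perm A))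
            - ((μ.colLen i : K) - 1) • zCol K μ S a i) := by
  set C := colSet μ S i with hC
  set c := youngSymm K μ S with hc
  set n := μ.colLen i with hn
  have hcard : C.card = n := card_colSet hS i
  have hamem : ∀ b ∈ C, a ≠ b := by
    intro b hb
    simp only [hC, colSet, Finset.mem_filter, Finset.mem_univ, true_and] at hb
    obtain ⟨cb, _, rfl⟩ := hb
    exact (ha cb).symm
  -- the key absorption identity
  have key : ∀ b ∈ C, ∀ b' ∈ C, b ≠ b' →
      c * MonoidAlgebra.single (Equiv.swap a b * Equiv.swap a b') (1 : K)
        = - (c * MonoidAlgebra.single (Equiv.swap a b) (1 : K)) := by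
    intro b hb b' hb' hbb
    rw [swap_swap_eq (hamem b hb) (hamem b' hb') hbb]
    have hsplit : MonoidAlgebra.single (Equiv.swap b b' * Equiv.swap a b) (1 : K)
        = MonoidAlgebra.single (Equiv.swap b b') (1 : K)
            * MonoidAlgebra.single (Equiv.swap a b) (1 : K) := by
      rw [MonoidAlgebra.single_mul_single, one_mul]
    rw [hsplit, ← mul_assoc, youngSymm_mul_swap hS hb hb' hbb, neg_mul]
  have hz2 : zCol K μ S a i * zCol K μ S a i
      = ∑ b ∈ C, ∑ b' ∈ C,
          MonoidAlgebra.single (Equiv.swap a b * Equiv.swap a b') (1 : K) := by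
    rw [zCol, Finset.sum_mul_sum]
    simp [MonoidAlgebra.single_mul_single, hC]
  have inner : ∀ b ∈ C,
      c * ∑ b' ∈ C, MonoidAlgebra.single (Equiv.swap a b * Equiv.swap a b') (1 : K)
        = c - ((n : K) - 1) • (c * MonoidAlgebra.single (Equiv.swap a b) (1 : K)) := by
    intro b hb
    rw [Finset.mul_sum, ← Finset.add_sum_erase _ _ hb]
    have hdiag : c * MonoidAlgebra.single (Equiv.swap a b * Equiv.swap a b) (1 : K) = c := by
      rw [Equiv.swap_mul_self, ← MonoidAlgebra.one_def, mul_one]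
    rw [hdiag]
    have hrest : ∑ b' ∈ C.erase b,
        c * MonoidAlgebra.single (Equiv.swap a b * Equiv.swap a b') (1 : K)
          = -(((n : K) - 1) • (c * MonoidAlgebra.single (Equiv.swap a b) (1 : K))) := by
      rw [Finset.sum_congr rfl (fun b' hb' => key b hb b'
          (Finset.mem_of_mem_erase hb') (Finset.ne_of_mem_erase hb').symm)]
      rw [Finset.sum_const, Finset.card_erase_of_mem hb, hcard]
      have h1 : 1 ≤ n := by
        rw [← hcard]
        exact Finset.card_pos.2 ⟨b, hb⟩
      rw [smul_neg, ← Nat.cast_smul_eq_nsmul K, Nat.cast_sub h1, Nat.cast_one]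
    rw [hrest]
    ring_nf
    abel
  calc c * (zCol K μ S a i * zCol K μ S a i)
      = ∑ b ∈ C, (c - ((n : K) - 1) • (c * MonoidAlgebra.single (Equiv.swap a b) (1 : K))) := by
        rw [hz2, Finset.mul_sum]
        exact Finset.sum_congr rfl inner
    _ = (n : K) • c - ((n : K) - 1) • (c * zCol K μ S a i) := by
        rw [Finset.sum_sub_distrib, Finset.sum_const, hcard, ← Nat.cast_smul_eq_nsmul K,
          ← Finset.smul_sum, ← Finset.mul_sum, zCol]
    _ = c * ((n : K) • (1 : MonoidAlgebra K (Equiv.Perm A)) - ((n : K) - 1) • zCol K μ S a i) := by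
        rw [mul_sub, mul_smul_comm, mul_one, mul_smul_comm]
end

section
/- Let T be a Young tableau of shape λ ⊢ n with entry set A obtained from a subtableau S of shape μ ⊢ n−1 by adding one box with entry a in position (u,v). If j < v and z_j = ∑_{b ∈ C_j(S)} (a,b), then for any permutation σ ∈ S_A fixing all entries of S in its first v−1 columns, a_λ(T) · c_μ(S) · σ · (1 − z_j) = 0. -/
open scoped Classical

namespace YoungAux

open Finset Equiv MonoidAlgebra

variable {K : Type*} [Field K] {A : Type*} [Fintype A] [DecidableEq A]

/-- permutations supported inside `D` -/
noncomputable def permsOn (A : Type*) [Fintype A] [DecidableEq A] (D : Finset A) :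
    Finset (Equiv.Perm A) :=
  Finset.univ.filter (fun ρ => ∀ x ∉ D, ρ x = x)

lemma mem_permsOn {D : Finset A} {ρ : Equiv.Perm A} :
    ρ ∈ permsOn A D ↔ ∀ x ∉ D, ρ x = x := by
  simp [permsOn]

lemma permsOn_inv {D : Finset A} {ρ : Equiv.Perm A} (h : ρ ∈ permsOn A D) :
    ρ⁻¹ ∈ permsOn A D := by
  rw [mem_permsOn] at h ⊢
  intro x hx
  have := h x hx
  conv_lhs => rw [← this]
  simp

lemma permsOn_mul {D : Finset A} {ρ τ : Equiv.Perm A} (h1 : ρ ∈ permsOn A D)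
    (h2 : τ ∈ permsOn A D) : ρ * τ ∈ permsOn A D := by
  rw [mem_permsOn] at h1 h2 ⊢
  intro x hx
  simp [Equiv.Perm.mul_apply, h2 x hx, h1 x hx]

lemma permsOn_maps {D : Finset A} {ρ : Equiv.Perm A} (h : ρ ∈ permsOn A D)
    {x : A} (hx : x ∈ D) : ρ x ∈ D := by
  by_contra hρx
  rw [mem_permsOn] at h
  have h1 := h (ρ x) hρx
  have h2 := ρ.injective h1
  rw [h2] at hρx
  exact hρx hx

/-- the antisymmetrizer over a set `D` -/
noncomputable def asym (K : Type*) [Field K] {A : Type*} [Fintype A] [DecidableEq A]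
    (D : Finset A) : MonoidAlgebra K (Equiv.Perm A) :=
  ∑ ρ ∈ permsOn A D, MonoidAlgebra.single ρ ((Equiv.Perm.sign ρ : ℤ) : K)

/-- absorption of an element of a multiplicatively closed set on the right -/
lemma sum_single_absorb_right {G : Finset (Equiv.Perm A)}
    (hmul : ∀ g ∈ G, ∀ h ∈ G, g * h ∈ G) {s : Equiv.Perm A} (hs : s ∈ G) :
    (∑ g ∈ G, MonoidAlgebra.single g (1 : K)) * MonoidAlgebra.single s 1
      = ∑ g ∈ G, MonoidAlgebra.single g (1 : K) := by
  rw [Finset.sum_mul]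
  simp_rw [MonoidAlgebra.single_mul_single, one_mul]
  have hinj : Function.Injective (fun g : Equiv.Perm A => g * s) :=
    fun a b h => mul_right_cancel h
  have himg : G.image (fun g => g * s) = G := by
    apply Finset.eq_of_subset_of_card_le
    · intro x hx
      obtain ⟨g, hg, rfl⟩ := Finset.mem_image.mp hx
      exact hmul g hg s hs
    · rw [Finset.card_image_of_injective _ hinj]
  conv_rhs => rw [← himg]
  rw [Finset.sum_image (fun a _ b _ h => hinj h)]

lemma sum_single_mul_sum_single {G H : Finset (Equiv.Perm A)}
    (hmul : ∀ g ∈ G, ∀ h ∈ G, g * h ∈ G) (hHG : ∀ s ∈ H, s ∈ G) :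
    (∑ g ∈ G, MonoidAlgebra.single g (1 : K)) * (∑ s ∈ H, MonoidAlgebra.single s (1 : K))
      = H.card • ∑ g ∈ G, MonoidAlgebra.single g (1 : K) := by
  rw [Finset.mul_sum,
    Finset.sum_congr rfl (fun s hs => sum_single_absorb_right hmul (hHG s hs)),
    Finset.sum_const]

/-- conjugation moves an antisymmetrizer past a single -/
lemma single_mul_asym (σ : Equiv.Perm A) (c : K) (D : Finset A) :
    MonoidAlgebra.single σ c * asym K D = asym K (D.image σ) * MonoidAlgebra.single σ c := by
  rw [asym, asym, Finset.mul_sum, Finset.sum_mul]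
  simp_rw [MonoidAlgebra.single_mul_single]
  refine Finset.sum_nbij' (fun ρ => σ * ρ * σ⁻¹) (fun ρ => σ⁻¹ * ρ * σ) ?_ ?_ ?_ ?_ ?_
  · intro ρ hρ
    rw [mem_permsOn] at hρ ⊢
    intro x hx
    have hsx : σ⁻¹ x ∉ D := by
      intro hmem
      exact hx (Finset.mem_image.mpr ⟨σ⁻¹ x, hmem, by simp⟩)
    rw [Equiv.Perm.mul_apply, Equiv.Perm.mul_apply, hρ _ hsx]
    simp
  · intro ρ hρ
    rw [mem_permsOn] at hρ ⊢
    intro x hx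
    have hsx : σ x ∉ D.image σ := by
      intro hmem
      obtain ⟨y, hy, hyx⟩ := Finset.mem_image.mp hmem
      rw [σ.injective hyx] at hy
      exact hx hy
    simp [Equiv.Perm.mul_apply, hρ _ hsx]
  · intro ρ _; group
  · intro ρ _; group
  · intro ρ _
    have h1 : σ * ρ = (σ * ρ * σ⁻¹) * σ := by group
    have h2 : Equiv.Perm.sign (σ * ρ * σ⁻¹) = Equiv.Perm.sign ρ := by
      simp only [Equiv.Perm.sign_mul, Equiv.Perm.sign_inv]
      rw [mul_comm (Equiv.Perm.sign σ) (Equiv.Perm.sign ρ), mul_assoc, Int.units_mul_self,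
        mul_one]
    rw [← h1, h2, mul_comm]

/-- absorption of a member on the left of an antisymmetrizer, with sign -/
lemma single_mem_mul_asym {D : Finset A} {s : Equiv.Perm A} (hs : s ∈ permsOn A D) :
    MonoidAlgebra.single s (1 : K) * asym K D
      = ((Equiv.Perm.sign s : ℤ) : K) • asym K D := by
  rw [asym, Finset.mul_sum, Finset.smul_sum]
  simp_rw [MonoidAlgebra.single_mul_single, one_mul, MonoidAlgebra.smul_single']
  refine Finset.sum_nbij' (fun ρ => s * ρ) (fun ρ => s⁻¹ * ρ) ?_ ?_ ?_ ?_ ?_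
  · intro ρ hρ; exact permsOn_mul hs hρ
  · intro ρ hρ; exact permsOn_mul (permsOn_inv hs) hρ
  · intro ρ _; group
  · intro ρ _; group
  · intro ρ _
    congr 1
    have : Equiv.Perm.sign s * Equiv.Perm.sign (s * ρ) = Equiv.Perm.sign ρ := by
      rw [Equiv.Perm.sign_mul, ← mul_assoc, Int.units_mul_self, one_mul]
    rw [← Int.cast_mul, ← Units.val_mul, this]


/-- key coset decomposition: `asym D * (1 - ∑_{b∈D} (a,b)) = asym (insert a D)` -/
lemma asym_mul_one_sub_swaps {D : Finset A} {a : A} (ha : a ∉ D) :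
    asym K D * (1 - ∑ b ∈ D, MonoidAlgebra.single (Equiv.swap a b) (1 : K))
      = asym K (insert a D) := by
  have hsplit : asym K (insert a D)
      = ∑ p ∈ (insert a D) ×ˢ permsOn A D,
          MonoidAlgebra.single (p.2 * Equiv.swap a p.1)
            ((Equiv.Perm.sign (p.2 * Equiv.swap a p.1) : ℤ) : K) := by
    rw [asym]
    refine Finset.sum_nbij' (fun ρ => (ρ⁻¹ a, ρ * Equiv.swap a (ρ⁻¹ a)))
      (fun p => p.2 * Equiv.swap a p.1) ?_ ?_ ?_ ?_ ?_
    · intro ρ hρ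
      rw [Finset.mem_product]
      constructor
      · exact permsOn_maps (permsOn_inv hρ) (Finset.mem_insert_self a D)
      · rw [mem_permsOn]
        intro y hy
        by_cases hya : y = a
        · subst hya
          simp [Equiv.Perm.mul_apply]
        · have hyi : y ∉ insert a D := by simp [hya, hy]
          have h1 : ρ y = y := (mem_permsOn.mp hρ) y hyi
          have h2 : y ≠ ρ⁻¹ a := by
            intro h
            apply hya
            rw [h] at h1 ⊢
            have h3 : ρ (ρ⁻¹ a) = a := by simp
            rw [h3] at h1
            exact h1.symm
          rw [Equiv.Perm.mul_apply, Equiv.swap_apply_of_ne_of_ne hya h2, h1]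
    · intro p hp
      rw [Finset.mem_product] at hp
      rw [mem_permsOn]
      intro y hy
      have hyD : y ∉ D := fun h => hy (Finset.mem_insert_of_mem h)
      have hya : y ≠ a := fun h => hy (h ▸ Finset.mem_insert_self a D)
      have hyp : y ≠ p.1 := by
        intro h
        subst h
        exact hy hp.1
      simp [Equiv.Perm.mul_apply, Equiv.swap_apply_of_ne_of_ne hya hyp,
        (mem_permsOn.mp hp.2) y hyD]
    · intro ρ _
      simp [mul_assoc, Equiv.swap_mul_self]
    · intro p hp
      rw [Finset.mem_product] at hp
      have hfix : p.2⁻¹ a = a := (mem_permsOn.mp (permsOn_inv hp.2)) a ha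
      have h1 : (p.2 * Equiv.swap a p.1)⁻¹ a = p.1 := by
        simp [Equiv.Perm.mul_apply, hfix]
      beta_reduce
      rw [h1, Prod.ext_iff]
      exact ⟨rfl, by simp [mul_assoc, Equiv.swap_mul_self]⟩
    · intro ρ _
      have hcan : (ρ * Equiv.swap a (ρ⁻¹ a)) * Equiv.swap a (ρ⁻¹ a) = ρ := by
        simp [mul_assoc, Equiv.swap_mul_self]
      beta_reduce
      rw [hcan]
  rw [hsplit, Finset.sum_product, Finset.sum_insert ha, mul_sub, mul_one, Finset.mul_sum]
  have hfirst : ∑ ρ ∈ permsOn A D,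
      MonoidAlgebra.single (ρ * Equiv.swap a a)
        ((Equiv.Perm.sign (ρ * Equiv.swap a a) : ℤ) : K) = asym K D := by
    apply Finset.sum_congr rfl
    intro ρ _
    rw [Equiv.swap_self]
    congr 1 <;> simp
  rw [hfirst]
  have hsecond : ∀ b ∈ D, (∑ ρ ∈ permsOn A D, MonoidAlgebra.single (ρ * Equiv.swap a b)
      ((Equiv.Perm.sign (ρ * Equiv.swap a b) : ℤ) : K))
      = -(asym K D * MonoidAlgebra.single (Equiv.swap a b) (1 : K)) := by
    intro b hb
    have hab : a ≠ b := fun h => ha (h ▸ hb)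
    rw [asym, Finset.sum_mul, ← Finset.sum_neg_distrib]
    apply Finset.sum_congr rfl
    intro ρ _
    rw [MonoidAlgebra.single_mul_single, mul_one, Equiv.Perm.sign_mul,
      Equiv.Perm.sign_swap hab]
    have : ((((Equiv.Perm.sign ρ) * (-1) : ℤˣ) : ℤ) : K)
        = -(((Equiv.Perm.sign ρ : ℤ)) : K) := by push_cast; ring
    rw [this]
    exact MonoidAlgebra.single_neg _ _
  rw [Finset.sum_congr rfl hsecond, Finset.sum_neg_distrib, ← sub_eq_add_neg]


lemma permsOn_mapsto_iff {D : Finset A} {ρ : Equiv.Perm A} (h : ρ ∈ permsOn A D) (x : A) :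
    x ∈ D ↔ ρ x ∈ D := by
  constructor
  · exact fun hx => permsOn_maps h hx
  · intro hx
    by_contra hxD
    have := (mem_permsOn.mp h) x hxD
    rw [this] at hx
    exact hxD hx

/-- factorization of a sum over a "column group" through the stabilizer of `C` -/
lemma factor_sum {G Gf : Finset (Equiv.Perm A)} (C : Finset A)
    (hGf : ∀ τ : Equiv.Perm A, τ ∈ Gf ↔ (τ ∈ G ∧ ∀ x ∈ C, τ x = x))
    (hmul : ∀ g ∈ G, ∀ h ∈ G, g * h ∈ G)
    (hsubP : ∀ π ∈ permsOn A C, π ∈ G)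
    (hmaps : ∀ ρ ∈ G, ∀ x : A, x ∈ C ↔ ρ x ∈ C) :
    (∑ ρ ∈ G, MonoidAlgebra.single ρ ((Equiv.Perm.sign ρ : ℤ) : K))
      = (∑ τ ∈ Gf, MonoidAlgebra.single τ ((Equiv.Perm.sign τ : ℤ) : K)) * asym K C := by
  rw [asym, Finset.sum_mul_sum]
  simp_rw [MonoidAlgebra.single_mul_single]
  rw [← Finset.sum_product']
  refine Finset.sum_bij'
    (i := fun ρ hρ => (ρ * (Equiv.Perm.ofSubtype (ρ.subtypePerm (fun x => (hmaps ρ hρ x).symm)))⁻¹,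
        Equiv.Perm.ofSubtype (ρ.subtypePerm (fun x => (hmaps ρ hρ x).symm))))
    (j := fun p _ => p.1 * p.2) ?_ ?_ ?_ ?_ ?_
  · -- i maps into the product
    intro ρ hρ
    rw [Finset.mem_product]
    have hπ : Equiv.Perm.ofSubtype (ρ.subtypePerm (fun x => (hmaps ρ hρ x).symm)) ∈ permsOn A C := by
      rw [mem_permsOn]
      intro x hx
      exact Equiv.Perm.ofSubtype_apply_of_not_mem _ hx
    constructor
    · rw [hGf]
      constructor
      · exact hmul ρ hρ _ (hsubP _ (permsOn_inv hπ))
      · intro x hx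
        set π := Equiv.Perm.ofSubtype (ρ.subtypePerm (fun x => (hmaps ρ hρ x).symm)) with hπdef
        have hy : π⁻¹ x ∈ C := permsOn_maps (permsOn_inv hπ) hx
        have h1 : π (π⁻¹ x) = x := by simp
        have h2 : π (π⁻¹ x) = ρ (π⁻¹ x) := by
          rw [hπdef, Equiv.Perm.ofSubtype_apply_of_mem _ hy]
          rfl
        show ρ (π⁻¹ x) = x
        rw [← h2, h1]
    · exact hπ
  · -- j maps into G
    intro p hp
    rw [Finset.mem_product] at hp
    exact hmul _ ((hGf p.1).mp hp.1).1 _ (hsubP _ hp.2)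
  · -- left inverse
    intro ρ _
    beta_reduce
    group
  · -- right inverse
    intro p hp
    rw [Finset.mem_product] at hp
    obtain ⟨hp1, hp2⟩ := hp
    have hmem : p.1 * p.2 ∈ G := hmul _ ((hGf p.1).mp hp1).1 _ (hsubP _ hp2)
    have hofs : Equiv.Perm.ofSubtype ((p.1 * p.2).subtypePerm (fun x => (hmaps _ hmem x).symm)) = p.2 := by
      apply Equiv.ext
      intro x
      by_cases hx : x ∈ C
      · rw [Equiv.Perm.ofSubtype_apply_of_mem _ hx]
        have hpx : p.2 x ∈ C := permsOn_maps hp2 hx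
        have : (p.1 * p.2) x = p.2 x := ((hGf p.1).mp hp1).2 _ hpx
        exact this
      · rw [Equiv.Perm.ofSubtype_apply_of_not_mem _ hx, (mem_permsOn.mp hp2) x hx]
    beta_reduce
    rw [hofs, Prod.ext_iff]
    constructor
    · simp
    · rfl
  · -- values agree
    intro ρ hρ
    set π := Equiv.Perm.ofSubtype (ρ.subtypePerm (fun x => (hmaps ρ hρ x).symm)) with hπdef
    beta_reduce
    have hcan : ρ * π⁻¹ * π = ρ := by group
    rw [hcan, ← Int.cast_mul, ← Units.val_mul, ← Equiv.Perm.sign_mul, hcan]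

/-- killing lemma: if a multiplicatively closed `G` absorbs an odd element of `permsOn A D`
on the right, then `(∑ G) * asym D = 0`. -/
lemma sum_mul_asym_eq_zero [CharZero K] {G : Finset (Equiv.Perm A)} {D : Finset A}
    {s : Equiv.Perm A} (hmul : ∀ g ∈ G, ∀ h ∈ G, g * h ∈ G) (hsG : s ∈ G)
    (hsD : s ∈ permsOn A D) (hsgn : Equiv.Perm.sign s = -1) :
    (∑ g ∈ G, MonoidAlgebra.single g (1 : K)) * asym K D = 0 := by
  have h1 : (∑ g ∈ G, MonoidAlgebra.single g (1 : K)) * asym K D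
      = -((∑ g ∈ G, MonoidAlgebra.single g (1 : K)) * asym K D) := by
    conv_lhs => rw [← sum_single_absorb_right hmul hsG, mul_assoc,
      single_mem_mul_asym hsD, hsgn]
    push_cast
    rw [neg_smul, one_smul, mul_neg]
  have h2 : (2 : K) • ((∑ g ∈ G, MonoidAlgebra.single g (1 : K)) * asym K D) = 0 := by
    rw [two_smul]
    nth_rewrite 1 [h1]
    rw [neg_add_cancel]
  rcases smul_eq_zero.mp h2 with h | h
  · exact absurd h two_ne_zero
  · exact h

end YoungAux


open YoungAux

/-- `T` is obtained from `S` by adding one box with entry `a` at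
position `(u,v)` (0-indexed). For `j < v` (a column strictly to the left of the
added box) and any permutation `σ` fixing all entries of `S` in the columns left
of column `v`, one has `a_λ(T) · c_μ(S) · σ · (1 − z_j) = 0`. -/
theorem aRow_young_left_col (K : Type*) [Field K] [CharZero K] {A : Type*} [Fintype A]
    [DecidableEq A] (l μ : YoungDiagram) (u v : ℕ)
    (hmem : (u, v) ∈ l.cells) (hnot : (u, v) ∉ μ.cells)
    (hcells : l.cells = insert (u, v) μ.cells)
    (hsub : μ.cells ⊆ l.cells)
    (T : l.cells → A) (hT : Function.Bijective T)
    (j : ℕ) (hj : j < v) (σ : Equiv.Perm A)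
    (hσ : ∀ c : μ.cells, (c : ℕ × ℕ).2 < v →
        σ (T ⟨c.1, hsub c.2⟩) = T ⟨c.1, hsub c.2⟩) :
    aRow K l T * youngSymm K μ (fun c => T ⟨c.1, hsub c.2⟩) *
        MonoidAlgebra.single σ (1 : K) *
        (1 - zCol K μ (fun c => T ⟨c.1, hsub c.2⟩) (T ⟨(u, v), hmem⟩) j) = 0 := by
  set S : μ.cells → A := fun c => T ⟨c.1, hsub c.2⟩ with hSdef
  set a : A := T ⟨(u, v), hmem⟩ with hadef
  have hTinj := hT.injective
  have hSval : ∀ c : μ.cells, S c = T ⟨c.1, hsub c.2⟩ := fun c => rfl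
  have hSinj : ∀ c₁ c₂ : μ.cells, S c₁ = S c₂ → c₁ = c₂ := by
    intro c₁ c₂ h
    have h2 : T ⟨c₁.1, hsub c₁.2⟩ = T ⟨c₂.1, hsub c₂.2⟩ := h
    have h3 : ((⟨c₁.1, hsub c₁.2⟩ : { x // x ∈ l.cells }) : ℕ × ℕ)
        = ((⟨c₂.1, hsub c₂.2⟩ : { x // x ∈ l.cells }) : ℕ × ℕ) :=
      congrArg Subtype.val (hTinj h2)
    exact Subtype.ext h3
  have hSa : ∀ c : μ.cells, S c ≠ a := by
    intro c h
    have h1 : T ⟨c.1, hsub c.2⟩ = T ⟨(u, v), hmem⟩ := h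
    have h2 := hTinj h1
    have h3 : (c : ℕ × ℕ) = (u, v) := congrArg Subtype.val h2
    exact hnot (h3 ▸ c.2)
  set C : Finset A := colSet μ S j with hCdef
  have hCmem : ∀ x : A, x ∈ C ↔ ∃ c : μ.cells, (c : ℕ × ℕ).2 = j ∧ S c = x := by
    intro x
    rw [hCdef, colSet]
    simp
  have hCfix : ∀ x ∈ C, σ x = x := by
    intro x hx
    obtain ⟨c, hcj, rfl⟩ := (hCmem x).mp hx
    exact hσ c (by rw [hcj]; exact hj)
  have haC : a ∉ C := by
    intro h
    obtain ⟨c, _, hc⟩ := (hCmem a).mp h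
    exact hSa c hc
  have ha'C : σ a ∉ C := by
    intro h
    have h1 : σ (σ a) = σ a := hCfix _ h
    have h2 : σ a = a := σ.injective h1
    rw [h2] at h
    exact haC h
  -- capture the three permutation groups as finsets
  obtain ⟨GT, hGT, hGTmem⟩ : ∃ G : Finset (Equiv.Perm A),
      aRow K l T = ∑ g ∈ G, MonoidAlgebra.single g (1 : K) ∧
      ∀ s : Equiv.Perm A, s ∈ G ↔ ((∀ x : A, (∀ c : l.cells, T c ≠ x) → s x = x) ∧
        ∀ c : l.cells, ∃ c' : l.cells, (c' : ℕ × ℕ).1 = (c : ℕ × ℕ).1 ∧ s (T c) = T c') :=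
    ⟨_, rfl, fun s => by simp [Finset.mem_filter]⟩
  obtain ⟨GS, hGS, hGSmem⟩ : ∃ G : Finset (Equiv.Perm A),
      aRow K μ S = ∑ g ∈ G, MonoidAlgebra.single g (1 : K) ∧
      ∀ s : Equiv.Perm A, s ∈ G ↔ ((∀ x : A, (∀ c : μ.cells, S c ≠ x) → s x = x) ∧
        ∀ c : μ.cells, ∃ c' : μ.cells, (c' : ℕ × ℕ).1 = (c : ℕ × ℕ).1 ∧ s (S c) = S c') :=
    ⟨_, rfl, fun s => by simp [Finset.mem_filter]⟩
  obtain ⟨Gc, hGc, hGcmem⟩ : ∃ G : Finset (Equiv.Perm A),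
      bCol K μ S = ∑ τ ∈ G, MonoidAlgebra.single τ ((Equiv.Perm.sign τ : ℤ) : K) ∧
      ∀ τ : Equiv.Perm A, τ ∈ G ↔ ((∀ x : A, (∀ c : μ.cells, S c ≠ x) → τ x = x) ∧
        ∀ c : μ.cells, ∃ c' : μ.cells, (c' : ℕ × ℕ).2 = (c : ℕ × ℕ).2 ∧ τ (S c) = S c') :=
    ⟨_, rfl, fun τ => by simp [Finset.mem_filter]⟩
  set Gf : Finset (Equiv.Perm A) := Gc.filter (fun τ => ∀ x ∈ C, τ x = x) with hGfdef
  have hGfmem : ∀ τ : Equiv.Perm A, τ ∈ Gf ↔ (τ ∈ Gc ∧ ∀ x ∈ C, τ x = x) := by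
    intro τ
    rw [hGfdef]
    exact Finset.mem_filter
  -- closure of the groups under multiplication
  have hGTmul : ∀ g ∈ GT, ∀ h ∈ GT, g * h ∈ GT := by
    intro g hg h hh
    rw [hGTmem] at hg hh ⊢
    constructor
    · intro x hx
      rw [Equiv.Perm.mul_apply, hh.1 x hx, hg.1 x hx]
    · intro c
      obtain ⟨c', hc'r, hc'⟩ := hh.2 c
      obtain ⟨c'', hc''r, hc''⟩ := hg.2 c'
      exact ⟨c'', hc''r.trans hc'r, by rw [Equiv.Perm.mul_apply, hc', hc'']⟩
  have hGcmul : ∀ g ∈ Gc, ∀ h ∈ Gc, g * h ∈ Gc := by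
    intro g hg h hh
    rw [hGcmem] at hg hh ⊢
    constructor
    · intro x hx
      rw [Equiv.Perm.mul_apply, hh.1 x hx, hg.1 x hx]
    · intro c
      obtain ⟨c', hc'r, hc'⟩ := hh.2 c
      obtain ⟨c'', hc''r, hc''⟩ := hg.2 c'
      exact ⟨c'', hc''r.trans hc'r, by rw [Equiv.Perm.mul_apply, hc', hc'']⟩
  -- permutations supported on C lie in the column group
  have hPC : ∀ π ∈ permsOn A C, π ∈ Gc := by
    intro π hπ
    rw [hGcmem]
    constructor
    · intro x hx
      apply (mem_permsOn.mp hπ) x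
      intro hxC
      obtain ⟨c, _, hc⟩ := (hCmem x).mp hxC
      exact hx c hc
    · intro c
      by_cases hcj : (c : ℕ × ℕ).2 = j
      · have hSc : S c ∈ C := (hCmem _).mpr ⟨c, hcj, rfl⟩
        have h1 : π (S c) ∈ C := permsOn_maps hπ hSc
        obtain ⟨c', hc'j, hc'⟩ := (hCmem _).mp h1
        exact ⟨c', by rw [hc'j, hcj], hc'.symm⟩
      · have hSc : S c ∉ C := by
          intro h
          obtain ⟨c', hc'j, hc'⟩ := (hCmem _).mp h
          exact hcj (by rw [← hSinj c' c hc']; exact hc'j)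
        exact ⟨c, rfl, (mem_permsOn.mp hπ) _ hSc⟩
  -- the column group preserves membership in C
  have hGcmaps : ∀ ρ ∈ Gc, ∀ x : A, x ∈ C ↔ ρ x ∈ C := by
    intro ρ hρ x
    rw [hGcmem] at hρ
    constructor
    · intro hx
      obtain ⟨c, hcj, rfl⟩ := (hCmem x).mp hx
      obtain ⟨c', hc'j, hc'⟩ := hρ.2 c
      rw [hc']
      exact (hCmem _).mpr ⟨c', by rw [hc'j, hcj], rfl⟩
    · intro hx
      by_contra hxC
      by_cases hent : ∃ c : μ.cells, S c = x
      · obtain ⟨c, rfl⟩ := hent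
        obtain ⟨c', hc'j, hc'⟩ := hρ.2 c
        rw [hc'] at hx
        obtain ⟨c'', hc''j, hc''⟩ := (hCmem _).mp hx
        have he : c'' = c' := hSinj _ _ hc''
        apply hxC
        refine (hCmem _).mpr ⟨c, ?_, rfl⟩
        rw [← hc'j, ← he, hc''j]
      · push_neg at hent
        rw [hρ.1 x hent] at hx
        exact hxC hx
  -- bCol factorizes through the stabilizer of C
  have hbfact : bCol K μ S
      = (∑ τ ∈ Gf, MonoidAlgebra.single τ ((Equiv.Perm.sign τ : ℤ) : K)) * asym K C := by
    rw [hGc]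
    exact factor_sum C hGfmem hGcmul hPC hGcmaps
  -- the row group of S embeds in the row group of T
  have hGSsub : ∀ s ∈ GS, s ∈ GT := by
    intro s hs
    rw [hGSmem] at hs
    rw [hGTmem]
    constructor
    · intro x hx
      apply hs.1 x
      intro c
      exact hx ⟨c.1, hsub c.2⟩
    · intro c
      by_cases hc : (c : ℕ × ℕ) ∈ μ.cells
      · obtain ⟨c', hc'r, hc'⟩ := hs.2 ⟨c.1, hc⟩
        refine ⟨⟨c'.1, hsub c'.2⟩, hc'r, ?_⟩
        have h1 : S ⟨c.1, hc⟩ = T c := congrArg T (Subtype.ext rfl)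
        rw [← h1, hc']
      · have hcv : (c : ℕ × ℕ) = (u, v) := by
          have h2 : (c : ℕ × ℕ) ∈ insert (u, v) μ.cells := by
            rw [← hcells]
            exact c.2
          rcases Finset.mem_insert.mp h2 with h | h
          · exact h
          · exact absurd h hc
        refine ⟨c, rfl, ?_⟩
        have hTc : T c = a := by
          rw [hadef]
          exact congrArg T (Subtype.ext hcv)
        rw [hTc]
        exact hs.1 a hSa
  have habs : aRow K l T * aRow K μ S = GS.card • aRow K l T := by
    rw [hGT, hGS]
    exact sum_single_mul_sum_single hGTmul hGSsub
  -- move σ past (1 - z_j)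
  set z' : MonoidAlgebra K (Equiv.Perm A) :=
    ∑ b ∈ C, MonoidAlgebra.single (Equiv.swap (σ a) b) (1 : K) with hz'def
  have hswapmove : MonoidAlgebra.single σ (1 : K) * (1 - zCol K μ S a j)
      = (1 - z') * MonoidAlgebra.single σ 1 := by
    rw [hz'def]
    simp only [zCol]
    rw [← hCdef]
    rw [mul_sub, sub_mul, mul_one, one_mul, Finset.mul_sum, Finset.sum_mul]
    congr 1
    apply Finset.sum_congr rfl
    intro b hb
    rw [MonoidAlgebra.single_mul_single, MonoidAlgebra.single_mul_single, one_mul]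
    congr 1
    have hbfix : σ b = b := hCfix b hb
    calc σ * Equiv.swap a b = Equiv.swap (σ a) (σ b) * σ := by
          rw [Equiv.swap_apply_apply]
          group
      _ = Equiv.swap (σ a) b * σ := by rw [hbfix]
  have hins : asym K C * (1 - z') = asym K (insert (σ a) C) := by
    rw [hz'def]
    exact asym_mul_one_sub_swaps ha'C
  -- the geometric kill step
  have hkill : ∀ τ ∈ Gf, aRow K l T * asym K (insert (τ (σ a)) C) = 0 := by
    intro τ hτ
    obtain ⟨hτc, hτfix⟩ := (hGfmem τ).mp hτ
    rw [hGcmem] at hτc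
    obtain ⟨c₀, hc₀⟩ := hT.surjective (σ a)
    have hc₀v : v ≤ (c₀ : ℕ × ℕ).2 := by
      by_contra hlt
      push_neg at hlt
      have hc₀μ : (c₀ : ℕ × ℕ) ∈ μ.cells := by
        have h2 : (c₀ : ℕ × ℕ) ∈ insert (u, v) μ.cells := by
          rw [← hcells]
          exact c₀.2
        rcases Finset.mem_insert.mp h2 with h | h
        · exfalso
          rw [h] at hlt
          exact lt_irrefl v hlt
        · exact h
      have hSc₀ : S ⟨c₀.1, hc₀μ⟩ = T c₀ := congrArg T (Subtype.ext rfl)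
      have hfix : σ (σ a) = σ a := by
        rw [← hc₀, ← hSc₀]
        exact hσ ⟨c₀.1, hc₀μ⟩ hlt
      have h3 : σ a = a := σ.injective hfix
      rw [h3] at hc₀
      exact hSa ⟨c₀.1, hc₀μ⟩ (hSc₀.trans hc₀)
    obtain ⟨c₁, hc₁v, hc₁⟩ : ∃ c₁ : l.cells, v ≤ (c₁ : ℕ × ℕ).2 ∧ T c₁ = τ (σ a) := by
      by_cases hc₀μ : (c₀ : ℕ × ℕ) ∈ μ.cells
      · have hSc₀ : S ⟨c₀.1, hc₀μ⟩ = T c₀ := congrArg T (Subtype.ext rfl)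
        obtain ⟨c', hc'c, hc'⟩ := hτc.2 ⟨c₀.1, hc₀μ⟩
        refine ⟨⟨c'.1, hsub c'.2⟩, ?_, ?_⟩
        · exact le_of_le_of_eq hc₀v hc'c.symm
        · have h5 : S c' = T ⟨c'.1, hsub c'.2⟩ := rfl
          rw [← h5, ← hc', hSc₀, hc₀]
      · have hc₀uv : (c₀ : ℕ × ℕ) = (u, v) := by
          have h2 : (c₀ : ℕ × ℕ) ∈ insert (u, v) μ.cells := by
            rw [← hcells]
            exact c₀.2
          rcases Finset.mem_insert.mp h2 with h | h
          · exact h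
          · exact absurd h hc₀μ
        have hTc₀ : T c₀ = a := by
          rw [hadef]
          exact congrArg T (Subtype.ext hc₀uv)
        have hsa : σ a = a := by rw [← hc₀, hTc₀]
        have hτa : τ (σ a) = σ a := by
          rw [hsa]
          exact hτc.1 a hSa
        refine ⟨c₀, ?_, by rw [hτa, hc₀]⟩
        rw [hc₀uv]
    have hrj : ((c₁ : ℕ × ℕ).1, j) ∈ μ.cells := by
      have hc₁l : ((c₁ : ℕ × ℕ).1, (c₁ : ℕ × ℕ).2) ∈ l := by
        rw [← YoungDiagram.mem_cells]
        have h0 := c₁.2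
        simp only [YoungDiagram.mem_cells] at h0
        rw [Prod.mk.eta]
        exact h0
      have h1 : ((c₁ : ℕ × ℕ).1, j) ∈ l := l.up_left_mem le_rfl (le_trans hj.le hc₁v) hc₁l
      have h2 : ((c₁ : ℕ × ℕ).1, j) ∈ insert (u, v) μ.cells := by
        rw [← hcells]
        exact (YoungDiagram.mem_cells _).mpr h1
      rcases Finset.mem_insert.mp h2 with h | h
      · exfalso
        have := congrArg Prod.snd h
        simp at this
        omega
      · exact h
    set x : A := τ (σ a) with hxdef
    set y : A := S ⟨((c₁ : ℕ × ℕ).1, j), hrj⟩ with hydef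
    have hyT : y = T ⟨((c₁ : ℕ × ℕ).1, j), hsub hrj⟩ := by rw [hydef]
    have hyC : y ∈ C := (hCmem y).mpr ⟨⟨((c₁ : ℕ × ℕ).1, j), hrj⟩, rfl, rfl⟩
    have hxy : x ≠ y := by
      rw [← hc₁, hyT]
      intro h
      have h2 := hTinj h
      have h3 := congrArg (fun c : l.cells => (c : ℕ × ℕ).2) h2
      simp at h3
      omega
    have hsmemT : Equiv.swap x y ∈ GT := by
      rw [hGTmem]
      constructor
      · intro w hw
        apply Equiv.swap_apply_of_ne_of_ne
        · intro h
          exact hw c₁ (by rw [hc₁, ← h])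
        · intro h
          exact hw ⟨((c₁ : ℕ × ℕ).1, j), hsub hrj⟩ (by rw [← hyT, ← h])
      · intro c
        by_cases hcx : T c = x
        · have hcc₁ : c = c₁ := hTinj (by rw [hcx, hc₁])
          refine ⟨⟨((c₁ : ℕ × ℕ).1, j), hsub hrj⟩, ?_, ?_⟩
          · rw [hcc₁]
          · rw [hcx, Equiv.swap_apply_left, hyT]
        · by_cases hcy : T c = y
          · have hcc : c = ⟨((c₁ : ℕ × ℕ).1, j), hsub hrj⟩ := hTinj (by rw [hcy, hyT])
            refine ⟨c₁, ?_, ?_⟩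
            · rw [hcc]
            · rw [hcy, Equiv.swap_apply_right, hc₁]
          · exact ⟨c, rfl, by rw [Equiv.swap_apply_of_ne_of_ne hcx hcy]⟩
    have hsD : Equiv.swap x y ∈ permsOn A (insert x C) := by
      rw [mem_permsOn]
      intro w hw
      apply Equiv.swap_apply_of_ne_of_ne
      · intro h
        exact hw (h ▸ Finset.mem_insert_self x C)
      · intro h
        exact hw (h ▸ Finset.mem_insert_of_mem hyC)
    have hsgn : Equiv.Perm.sign (Equiv.swap x y) = -1 := Equiv.Perm.sign_swap hxy
    rw [hGT]
    exact sum_mul_asym_eq_zero hGTmul hsmemT hsD hsgn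
  -- assemble everything
  have hsplit : aRow K l T * youngSymm K μ S * MonoidAlgebra.single σ (1 : K) *
      (1 - zCol K μ S a j)
      = aRow K l T * (aRow K μ S * (bCol K μ S *
        (MonoidAlgebra.single σ (1 : K) * (1 - zCol K μ S a j)))) := by
    simp only [youngSymm, mul_assoc]
  rw [hsplit]
  have hinner : bCol K μ S * (MonoidAlgebra.single σ (1 : K) * (1 - zCol K μ S a j))
      = ∑ τ ∈ Gf, asym K (insert (τ (σ a)) C) *
          (MonoidAlgebra.single τ ((Equiv.Perm.sign τ : ℤ) : K) *
            MonoidAlgebra.single σ (1 : K)) := by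
    rw [hswapmove, hbfact]
    rw [mul_assoc, ← mul_assoc (asym K C), hins]
    rw [Finset.sum_mul]
    apply Finset.sum_congr rfl
    intro τ hτ
    obtain ⟨_, hτfix⟩ := (hGfmem τ).mp hτ
    have himgC : C.image τ = C := by
      have h1 : C.image τ = C.image id := Finset.image_congr (fun w hw => hτfix w hw)
      rw [h1, Finset.image_id]
    have himg : (insert (σ a) C).image τ = insert (τ (σ a)) C := by
      rw [Finset.image_insert, himgC]
    rw [← mul_assoc, single_mul_asym, himg, mul_assoc]
  rw [hinner, ← mul_assoc, habs, smul_mul_assoc, Finset.mul_sum]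
  have hzero : ∀ τ ∈ Gf, aRow K l T * (asym K (insert (τ (σ a)) C) *
      (MonoidAlgebra.single τ ((Equiv.Perm.sign τ : ℤ) : K) *
        MonoidAlgebra.single σ (1 : K))) = 0 := by
    intro τ hτ
    rw [← mul_assoc, hkill τ hτ, zero_mul]
  rw [Finset.sum_congr rfl hzero, Finset.sum_const_zero, smul_zero]
end

section
/- Let S be a Young tableau of shape μ with entry set A₀ and a ∉ A₀. Suppose column v of S has the same length as column v+1 (μ'_v = μ'_{v+1}), and let v+1, …, v+l−1 be all columns of the same length μ'_v as column v lying to its right consecutively (forming one block). Set z_j = ∑_{b ∈ C_j(S)} (a,b), x̃ = ∑_{j=v+1}^{v+l−1} z_j, and x = z_v + x̃. Then c_μ(S)·(1 − z_v)·(1 − x̃/l) = c_μ(S)·(1 − x/l) in K[S_{A₀ ∪ {a}}]. -/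
open scoped Classical

set_option linter.unusedSectionVars false

section Aux

open Equiv Finset MonoidAlgebra

variable {K : Type*} [Field K] {A : Type*} [Fintype A] [DecidableEq A]
  {μ : YoungDiagram} {S : μ.cells → A}

/-- Membership predicate for the column group of a tableau. -/
abbrev ColP (μ : YoungDiagram) (S : μ.cells → A) (τ : Equiv.Perm A) : Prop :=
  (∀ x : A, (∀ c : μ.cells, S c ≠ x) → τ x = x) ∧
  ∀ c : μ.cells, ∃ c' : μ.cells, (c' : ℕ × ℕ).2 = (c : ℕ × ℕ).2 ∧ τ (S c) = S c'

/-- Membership predicate for the row group of a tableau. -/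
abbrev RowP (μ : YoungDiagram) (S : μ.cells → A) (π : Equiv.Perm A) : Prop :=
  (∀ x : A, (∀ c : μ.cells, S c ≠ x) → π x = x) ∧
  ∀ c : μ.cells, ∃ c' : μ.cells, (c' : ℕ × ℕ).1 = (c : ℕ × ℕ).1 ∧ π (S c) = S c'

theorem ColP.mul {τ₁ τ₂ : Equiv.Perm A} (h₁ : ColP μ S τ₁) (h₂ : ColP μ S τ₂) :
    ColP μ S (τ₁ * τ₂) := by
  constructor
  · intro x hx
    simp [Equiv.Perm.mul_apply, h₂.1 x hx, h₁.1 x hx]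
  · intro c
    obtain ⟨c₂, hcol₂, happ₂⟩ := h₂.2 c
    obtain ⟨c₃, hcol₃, happ₃⟩ := h₁.2 c₂
    exact ⟨c₃, by rw [hcol₃, hcol₂], by rw [Equiv.Perm.mul_apply, happ₂, happ₃]⟩

theorem RowP.mul {τ₁ τ₂ : Equiv.Perm A} (h₁ : RowP μ S τ₁) (h₂ : RowP μ S τ₂) :
    RowP μ S (τ₁ * τ₂) := by
  constructor
  · intro x hx
    simp [Equiv.Perm.mul_apply, h₂.1 x hx, h₁.1 x hx]
  · intro c
    obtain ⟨c₂, hcol₂, happ₂⟩ := h₂.2 c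
    obtain ⟨c₃, hcol₃, happ₃⟩ := h₁.2 c₂
    exact ⟨c₃, by rw [hcol₃, hcol₂], by rw [Equiv.Perm.mul_apply, happ₂, happ₃]⟩

theorem ColP.exists_pre (hS : Function.Injective S) {τ : Equiv.Perm A} (h : ColP μ S τ)
    (c : μ.cells) :
    ∃ c' : μ.cells, (c' : ℕ × ℕ).2 = (c : ℕ × ℕ).2 ∧ τ (S c') = S c := by
  classical
  have hf : ∀ d : {d : μ.cells // (d : ℕ × ℕ).2 = (c : ℕ × ℕ).2},
      ∃ d' : {d : μ.cells // (d : ℕ × ℕ).2 = (c : ℕ × ℕ).2}, τ (S d.1) = S d'.1 := by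
    intro d
    obtain ⟨c', hcol, happ⟩ := h.2 d.1
    exact ⟨⟨c', by rw [hcol, d.2]⟩, happ⟩
  choose f hf using hf
  have hinj : Function.Injective f := by
    intro d₁ d₂ hd
    have : τ (S d₁.1) = τ (S d₂.1) := by rw [hf d₁, hf d₂, hd]
    exact Subtype.ext (hS (τ.injective this))
  obtain ⟨d, hd⟩ := (Finite.injective_iff_surjective.mp hinj) ⟨c, rfl⟩
  exact ⟨d.1, d.2, by rw [hf d, hd]⟩

theorem ColP.inv (hS : Function.Injective S) {τ : Equiv.Perm A} (h : ColP μ S τ) :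
    ColP μ S τ⁻¹ := by
  constructor
  · intro x hx
    have h1 := h.1 x hx
    conv_lhs => rw [← h1]
    exact τ.symm_apply_apply x
  · intro c
    obtain ⟨c', hcol, happ⟩ := h.exists_pre hS c
    exact ⟨c', hcol, by rw [← happ, show τ⁻¹ (τ (S c')) = S c' from Equiv.symm_apply_apply τ _]⟩

theorem rowP_swap (hS : Function.Injective S) {c₁ c₂ : μ.cells}
    (h : (c₁ : ℕ × ℕ).1 = (c₂ : ℕ × ℕ).1) :
    RowP μ S (Equiv.swap (S c₁) (S c₂)) := by
  constructor
  · intro x hx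
    exact Equiv.swap_apply_of_ne_of_ne (Ne.symm (hx c₁)) (Ne.symm (hx c₂))
  · intro c
    by_cases h₁ : S c = S c₁
    · refine ⟨c₂, ?_, by rw [h₁, Equiv.swap_apply_left]⟩
      rw [← h, hS h₁]
    · by_cases h₂ : S c = S c₂
      · refine ⟨c₁, ?_, by rw [h₂, Equiv.swap_apply_right]⟩
        rw [h, hS h₂]
      · exact ⟨c, rfl, Equiv.swap_apply_of_ne_of_ne h₁ h₂⟩

/-- The finset of permutations supported inside `B`. -/
noncomputable def stabF {A : Type*} [Fintype A] [DecidableEq A] (B : Finset A) :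
    Finset (Equiv.Perm A) :=
  Finset.univ.filter fun σ : Equiv.Perm A => ∀ x ∉ B, σ x = x

theorem mem_stabF {B : Finset A} {σ : Equiv.Perm A} :
    σ ∈ stabF B ↔ ∀ x ∉ B, σ x = x := by
  simp [stabF]

theorem one_mem_stabF {B : Finset A} : (1 : Equiv.Perm A) ∈ stabF B := by
  simp [mem_stabF]

theorem stabF_mul {B : Finset A} {σ₁ σ₂ : Equiv.Perm A}
    (h₁ : σ₁ ∈ stabF B) (h₂ : σ₂ ∈ stabF B) : σ₁ * σ₂ ∈ stabF B := by
  rw [mem_stabF] at *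
  intro x hx
  rw [Equiv.Perm.mul_apply, h₂ x hx, h₁ x hx]

theorem stabF_inv {B : Finset A} {σ : Equiv.Perm A} (h : σ ∈ stabF B) : σ⁻¹ ∈ stabF B := by
  rw [mem_stabF] at *
  intro x hx
  conv_lhs => rw [← h x hx]
  exact σ.symm_apply_apply x

theorem stabF_maps {B : Finset A} {σ : Equiv.Perm A} (h : σ ∈ stabF B) {x : A}
    (hx : x ∈ B) : σ x ∈ B := by
  by_contra hc
  have h2 := mem_stabF.mp h _ hc
  have := σ.injective h2
  rw [this] at hc
  exact hc hx

theorem swap_mem_stabF {B : Finset A} {x y : A} (hx : x ∈ B) (hy : y ∈ B) :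
    Equiv.swap x y ∈ stabF B := by
  rw [mem_stabF]
  intro z hz
  exact Equiv.swap_apply_of_ne_of_ne (fun h => hz (h ▸ hx)) (fun h => hz (h ▸ hy))

theorem mem_colSet_iff {j : ℕ} {x : A} :
    x ∈ colSet μ S j ↔ ∃ c : μ.cells, (c : ℕ × ℕ).2 = j ∧ S c = x := by
  simp [colSet]

theorem colP_of_stab_colSet (hS : Function.Injective S) {j : ℕ} {ρ : Equiv.Perm A}
    (hρ : ρ ∈ stabF (colSet μ S j)) : ColP μ S ρ := by
  constructor
  · intro x hx
    refine mem_stabF.mp hρ x fun hmem => ?_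
    obtain ⟨c, _, hc⟩ := mem_colSet_iff.mp hmem
    exact hx c hc
  · intro c
    by_cases hc : S c ∈ colSet μ S j
    · have hmem : ρ (S c) ∈ colSet μ S j := stabF_maps hρ hc
      obtain ⟨c', hc'col, hc'⟩ := mem_colSet_iff.mp hmem
      obtain ⟨c₂, hc₂col, hc₂⟩ := mem_colSet_iff.mp hc
      have : c₂ = c := hS hc₂
      refine ⟨c', ?_, hc'.symm⟩
      rw [hc'col, ← this, hc₂col]
    · exact ⟨c, rfl, mem_stabF.mp hρ _ hc⟩

theorem sgn_cast_mul (τ ρ : Equiv.Perm A) :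
    ((Equiv.Perm.sign τ : ℤ) : K) * ((Equiv.Perm.sign ρ : ℤ) : K)
      = ((Equiv.Perm.sign (τ * ρ) : ℤ) : K) := by
  rw [map_mul]
  push_cast
  ring

theorem bCol_mul_single_s15 (hS : Function.Injective S) {ρ : Equiv.Perm A} (hρ : ColP μ S ρ) :
    bCol K μ S * MonoidAlgebra.single ρ ((Equiv.Perm.sign ρ : ℤ) : K) = bCol K μ S := by
  simp only [bCol, Finset.sum_mul, MonoidAlgebra.single_mul_single]
  refine Finset.sum_nbij' (i := fun τ => τ * ρ) (j := fun τ => τ * ρ⁻¹) ?_ ?_ ?_ ?_ ?_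
  · intro τ hτ
    rw [Finset.mem_filter] at *
    exact ⟨Finset.mem_univ _, ColP.mul hτ.2 hρ⟩
  · intro τ hτ
    rw [Finset.mem_filter] at *
    exact ⟨Finset.mem_univ _, ColP.mul hτ.2 (hρ.inv hS)⟩
  · intro τ _; group
  · intro τ _; group
  · intro τ _
    rw [sgn_cast_mul]

theorem youngSymm_mul_single (hS : Function.Injective S) {ρ : Equiv.Perm A}
    (hρ : ColP μ S ρ) :
    youngSymm K μ S * MonoidAlgebra.single ρ ((Equiv.Perm.sign ρ : ℤ) : K)
      = youngSymm K μ S := by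
  rw [youngSymm, mul_assoc, bCol_mul_single_s15 hS hρ]

theorem stabF_subset {B B' : Finset A} (h : B ⊆ B') : stabF B ⊆ stabF B' := by
  intro σ hσ
  rw [mem_stabF] at *
  exact fun x hx => hσ x (fun hxB => hx (h hxB))

theorem stab_insert_decomp (b : A) (Y : Finset A) (hb : b ∉ Y) :
    (∑ σ ∈ stabF (insert b Y), MonoidAlgebra.single σ ((Equiv.Perm.sign σ : ℤ) : K))
      = (∑ ρ ∈ stabF Y, MonoidAlgebra.single ρ ((Equiv.Perm.sign ρ : ℤ) : K)) *
        (∑ c ∈ insert b Y,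
          MonoidAlgebra.single (Equiv.swap b c) ((Equiv.Perm.sign (Equiv.swap b c) : ℤ) : K)) := by
  rw [Finset.sum_mul_sum]
  simp only [MonoidAlgebra.single_mul_single, sgn_cast_mul]
  rw [← Finset.sum_product']
  refine Finset.sum_nbij' (i := fun σ => (σ * Equiv.swap b (σ⁻¹ b), σ⁻¹ b))
    (j := fun p => p.1 * Equiv.swap b p.2) ?_ ?_ ?_ ?_ ?_
  · intro σ hσ
    rw [Finset.mem_product]
    have hσb : σ⁻¹ b ∈ insert b Y := stabF_maps (stabF_inv hσ) (Finset.mem_insert_self b Y)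
    constructor
    · rw [mem_stabF]
      intro x hx
      by_cases hxb : x = b
      · subst hxb
        rw [Equiv.Perm.mul_apply, Equiv.swap_apply_left, show σ (σ⁻¹ x) = x from Equiv.apply_symm_apply σ _]
      · have hxi : x ∉ insert b Y := by
          simp [Finset.mem_insert, hxb, hx]
        have hxs : x ≠ σ⁻¹ b := fun h => hxi (h ▸ hσb)
        rw [Equiv.Perm.mul_apply, Equiv.swap_apply_of_ne_of_ne hxb hxs]
        exact mem_stabF.mp hσ x hxi
    · exact hσb
  · intro p hp
    rw [Finset.mem_product] at hp
    exact stabF_mul (stabF_subset (Finset.subset_insert b Y) hp.1)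
      (swap_mem_stabF (Finset.mem_insert_self b Y) hp.2)
  · intro σ hσ
    simp only [mul_assoc, Equiv.swap_mul_self, mul_one]
  · intro p hp
    rw [Finset.mem_product] at hp
    have hpb : p.1 b = b := mem_stabF.mp hp.1 b hb
    have hc : (p.1 * Equiv.swap b p.2) p.2 = b := by
      rw [Equiv.Perm.mul_apply, Equiv.swap_apply_right, hpb]
    have hinv : (p.1 * Equiv.swap b p.2)⁻¹ b = p.2 :=
      Equiv.Perm.inv_eq_iff_eq.mpr hc.symm
    ext
    · simp only [hinv, mul_assoc, Equiv.swap_mul_self, mul_one]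
    · simp only [hinv]
  · intro σ hσ
    have : σ * Equiv.swap b (σ⁻¹ b) * Equiv.swap b (σ⁻¹ b) = σ := by
      rw [mul_assoc, Equiv.swap_mul_self, mul_one]
    simp only [this]


theorem sum_single_mul_sum_single {ι κ : Type*} (s : Finset ι) (t : Finset κ)
    (e : ι → Equiv.Perm A) (f : ι → K) (e' : κ → Equiv.Perm A) (g : κ → K) :
    (∑ x ∈ s, MonoidAlgebra.single (e x) (f x)) * (∑ y ∈ t, MonoidAlgebra.single (e' y) (g y))
      = ∑ x ∈ s, ∑ y ∈ t, MonoidAlgebra.single (e x * e' y) (f x * g y) := by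
  rw [Finset.sum_mul_sum]
  simp [MonoidAlgebra.single_mul_single]

theorem youngSymm_mul_stab_insert (hS : Function.Injective S) {v j : ℕ} (hvj : v ≠ j)
    (hlen : μ.colLen j = μ.colLen v) {b : A} (hb : b ∈ colSet μ S v) :
    youngSymm K μ S * (∑ σ ∈ stabF (insert b (colSet μ S j)),
        MonoidAlgebra.single σ ((Equiv.Perm.sign σ : ℤ) : K)) = 0 := by
  classical
  obtain ⟨c₀, hc₀v, hc₀b⟩ := mem_colSet_iff.mp hb
  have hbY : b ∉ colSet μ S j := by
    intro hmem
    obtain ⟨c₂, hc₂col, hc₂⟩ := mem_colSet_iff.mp hmem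
    have hcc : c₂ = c₀ := hS (hc₂.trans hc₀b.symm)
    exact hvj (by rw [← hc₀v, ← hc₂col, hcc])
  rw [youngSymm, mul_assoc, bCol, sum_single_mul_sum_single, Finset.mul_sum]
  refine Finset.sum_eq_zero fun τ hτmem => ?_
  have hτ : ColP μ S τ := (Finset.mem_filter.mp hτmem).2
  rw [aRow, sum_single_mul_sum_single, ← Finset.sum_product']
  -- data depending on τ
  obtain ⟨c', hc'col, hc'app⟩ := hτ.2 c₀
  rw [hc₀b] at hc'app
  have hc'v : (c' : ℕ × ℕ).2 = v := by rw [hc'col, hc₀v]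
  have hr' : (c' : ℕ × ℕ).1 < μ.colLen j := by
    have hmem := c'.2
    rw [YoungDiagram.mem_cells] at hmem
    have hmem2 : ((c' : ℕ × ℕ).1, (c' : ℕ × ℕ).2) ∈ μ := by
      rw [Prod.mk.eta]; exact hmem
    rw [YoungDiagram.mem_iff_lt_colLen, hc'v] at hmem2
    rw [hlen]
    exact hmem2
  set cy : μ.cells := ⟨((c' : ℕ × ℕ).1, j), by
    rw [YoungDiagram.mem_cells, YoungDiagram.mem_iff_lt_colLen]; exact hr'⟩ with hcy
  have hy'Y : S cy ∈ colSet μ S j := mem_colSet_iff.mpr ⟨cy, rfl, rfl⟩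
  have hpre : τ⁻¹ (S cy) ∈ colSet μ S j := by
    obtain ⟨c'', hcol'', happ''⟩ := (hτ.inv hS).2 cy
    exact mem_colSet_iff.mpr ⟨c'', hcol'', happ''.symm⟩
  have hne2 : b ≠ τ⁻¹ (S cy) := fun h => hbY (h ▸ hpre)
  set u := Equiv.swap (S c') (S cy) with hu_def
  set t' := Equiv.swap b (τ⁻¹ (S cy)) with ht'_def
  have hu : RowP μ S u := rowP_swap hS rfl
  have hkey : u * τ * t' = τ := by
    have h1 : u = τ * t' * τ⁻¹ := by
      have := Equiv.swap_apply_apply τ b (τ⁻¹ (S cy))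
      rw [show τ (τ⁻¹ (S cy)) = S cy from Equiv.apply_symm_apply τ _, hc'app] at this
      rw [hu_def, ht'_def, this]
    have h3 : t' * t' = 1 := by rw [ht'_def]; exact Equiv.swap_mul_self _ _
    rw [h1]
    simp [mul_assoc, h3]
  refine Finset.sum_involution (fun p _ => (p.1 * u, t' * p.2)) ?_ ?_ ?_ ?_
  · intro p hp
    have hperm : (p.1 * u) * (τ * (t' * p.2)) = p.1 * (τ * p.2) := by
      have h2 : (p.1 * u) * (τ * (t' * p.2)) = p.1 * ((u * τ * t') * p.2) := by group
      rw [h2, hkey]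
    have hsgn : ((Equiv.Perm.sign (t' * p.2) : ℤ) : K) = -((Equiv.Perm.sign p.2 : ℤ) : K) := by
      rw [map_mul, ht'_def, Equiv.Perm.sign_swap hne2]
      push_cast
      ring
    rw [hperm, hsgn, ← MonoidAlgebra.single_add]
    ring_nf
    exact MonoidAlgebra.single_zero _
  · intro p hp hne
    intro heq
    have h2 := congrArg Prod.snd heq
    simp only [] at h2
    have ht1 : t' = 1 := mul_eq_right.mp h2
    rw [ht'_def, Equiv.swap_eq_one_iff] at ht1
    exact hne2 ht1
  · intro p hp
    rw [Finset.mem_product] at hp ⊢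
    constructor
    · rw [Finset.mem_filter]
      exact ⟨Finset.mem_univ _, RowP.mul (Finset.mem_filter.mp hp.1).2 hu⟩
    · exact stabF_mul (swap_mem_stabF (Finset.mem_insert_self _ _)
        (Finset.mem_insert_of_mem hpre)) hp.2
  · intro p hp
    have hu2 : u * u = 1 := by rw [hu_def]; exact Equiv.swap_mul_self _ _
    have ht2 : t' * t' = 1 := by rw [ht'_def]; exact Equiv.swap_mul_self _ _
    ext
    · simp [mul_assoc, hu2]
    · simp [← mul_assoc, ht2]

theorem youngSymm_absorb_swaps [CharZero K] (hS : Function.Injective S) {v j : ℕ} (hvj : v ≠ j)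
    (hlen : μ.colLen j = μ.colLen v) {b : A} (hb : b ∈ colSet μ S v) :
    youngSymm K μ S * (∑ y ∈ colSet μ S j, MonoidAlgebra.single (Equiv.swap b y) (1 : K))
      = youngSymm K μ S := by
  classical
  set Y := colSet μ S j with hY
  have hbY : b ∉ Y := by
    intro hmem
    obtain ⟨c₂, hc₂col, hc₂⟩ := mem_colSet_iff.mp hmem
    obtain ⟨c₀, hc₀v, hc₀b⟩ := mem_colSet_iff.mp hb
    have hcc : c₂ = c₀ := hS (hc₂.trans hc₀b.symm)
    exact hvj (by rw [← hc₀v, ← hc₂col, hcc])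
  have h0 := youngSymm_mul_stab_insert (K := K) hS hvj hlen hb
  rw [stab_insert_decomp b Y hbY, ← mul_assoc] at h0
  have hck : youngSymm K μ S * (∑ ρ ∈ stabF Y, MonoidAlgebra.single ρ
      ((Equiv.Perm.sign ρ : ℤ) : K)) = ((stabF Y).card : K) • youngSymm K μ S := by
    rw [Finset.mul_sum]
    rw [Finset.sum_congr rfl (fun ρ hρ => youngSymm_mul_single hS (colP_of_stab_colSet hS hρ))]
    rw [Finset.sum_const, Nat.cast_smul_eq_nsmul]
  rw [hck, smul_mul_assoc] at h0
  have hcard : (((stabF Y).card : ℕ) : K) ≠ 0 :=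
    Nat.cast_ne_zero.mpr (Finset.card_ne_zero_of_mem one_mem_stabF)
  have hW : youngSymm K μ S * (∑ c ∈ insert b Y,
      MonoidAlgebra.single (Equiv.swap b c) ((Equiv.Perm.sign (Equiv.swap b c) : ℤ) : K)) = 0 := by
    rcases smul_eq_zero.mp h0 with h | h
    · exact absurd h hcard
    · exact h
  have hterm : ∀ y ∈ Y, MonoidAlgebra.single (Equiv.swap b y)
      ((Equiv.Perm.sign (Equiv.swap b y) : ℤ) : K)
        = - MonoidAlgebra.single (Equiv.swap b y) (1 : K) := by
    intro y hy
    have hby : b ≠ y := fun h => hbY (h ▸ hy)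
    rw [Equiv.Perm.sign_swap hby]
    have h1 : (((-1 : ℤˣ) : ℤ) : K) = -(1 : K) := by simp
    rw [h1]
    exact MonoidAlgebra.single_neg _ _
  rw [Finset.sum_insert hbY, Finset.sum_congr rfl hterm, Equiv.swap_self] at hW
  have hone : MonoidAlgebra.single (Equiv.refl A : Equiv.Perm A)
      ((Equiv.Perm.sign (Equiv.refl A : Equiv.Perm A) : ℤ) : K) = (1 : MonoidAlgebra K (Equiv.Perm A)) := by
    have : (Equiv.refl A : Equiv.Perm A) = 1 := rfl
    rw [this]
    simp [MonoidAlgebra.one_def]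
  rw [hone, Finset.sum_neg_distrib, mul_add, mul_one, mul_neg] at hW
  exact (add_neg_eq_zero.mp hW).symm

theorem swap_swap_comm {a b b' : A} (hab' : a ≠ b') (hbb' : b ≠ b') :
    Equiv.swap a b * Equiv.swap a b' = Equiv.swap b b' * Equiv.swap a b := by
  have h := Equiv.swap_apply_apply (Equiv.swap a b) a b'
  rw [Equiv.swap_apply_left, Equiv.swap_apply_of_ne_of_ne hab'.symm hbb'.symm] at h
  rw [h, inv_mul_cancel_right]

theorem youngSymm_zv_zj [CharZero K] (hS : Function.Injective S)
    (a : A) (ha : ∀ c : μ.cells, S c ≠ a) {v j : ℕ} (hvj : v ≠ j)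
    (hlen : μ.colLen j = μ.colLen v) :
    youngSymm K μ S * zCol K μ S a v * zCol K μ S a j
      = youngSymm K μ S * zCol K μ S a v := by
  classical
  rw [zCol, zCol, Finset.mul_sum (colSet μ S v)
    (fun b => MonoidAlgebra.single (Equiv.swap a b) (1 : K)) (youngSymm K μ S),
    Finset.sum_mul]
  refine Finset.sum_congr rfl fun b hbv => ?_
  obtain ⟨cb, hcbv, hcbS⟩ := mem_colSet_iff.mp hbv
  have hab : a ≠ b := fun h => ha cb (hcbS.trans h.symm)
  have hbj : b ∉ colSet μ S j := by
    intro hmem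
    obtain ⟨c₂, hc₂col, hc₂⟩ := mem_colSet_iff.mp hmem
    have hcc : c₂ = cb := hS (hc₂.trans hcbS.symm)
    exact hvj (by rw [← hcbv, ← hc₂col, hcc])
  rw [Finset.mul_sum]
  have hterm : ∀ b' ∈ colSet μ S j,
      youngSymm K μ S * MonoidAlgebra.single (Equiv.swap a b) (1 : K)
          * MonoidAlgebra.single (Equiv.swap a b') (1 : K)
        = youngSymm K μ S * MonoidAlgebra.single (Equiv.swap b b') (1 : K)
          * MonoidAlgebra.single (Equiv.swap a b) (1 : K) := by
    intro b' hb'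
    obtain ⟨c₂, hc₂col, hc₂⟩ := mem_colSet_iff.mp hb'
    have hab' : a ≠ b' := fun h => ha c₂ (hc₂.trans h.symm)
    have hbb' : b ≠ b' := fun h => hbj (h ▸ hb')
    rw [mul_assoc, mul_assoc, MonoidAlgebra.single_mul_single,
      MonoidAlgebra.single_mul_single, one_mul, swap_swap_comm hab' hbb']
  rw [Finset.sum_congr rfl hterm, ← Finset.sum_mul, ← Finset.mul_sum,
    youngSymm_absorb_swaps hS hvj hlen hbv]

end Aux

/-- columns `v, v+1, …, v+l−1` of `μ` form one block (all of the same
length, with column `v+l` strictly shorter). With `x̃ = ∑_{j=v+1}^{v+l−1} z_j` and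
`x = z_v + x̃`, one has `c_μ(S)·(1 − z_v)·(1 − x̃/l) = c_μ(S)·(1 − x/l)`. -/
theorem youngSymm_block_absorb (K : Type*) [Field K] [CharZero K] {A : Type*} [Fintype A]
    [DecidableEq A] (μ : YoungDiagram) (S : μ.cells → A) (hS : Function.Injective S)
    (a : A) (ha : ∀ c : μ.cells, S c ≠ a)
    (v l : ℕ) (hl : 2 ≤ l) (hpos : 0 < μ.colLen v)
    (hblock : ∀ j, v ≤ j → j < v + l → μ.colLen j = μ.colLen v)
    (hend : μ.colLen (v + l) < μ.colLen v)
    (xt : MonoidAlgebra K (Equiv.Perm A))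
    (hxt : xt = ∑ j ∈ Finset.Ico (v + 1) (v + l), zCol K μ S a j) :
    youngSymm K μ S * (1 - zCol K μ S a v) * (1 - (l : K)⁻¹ • xt)
      = youngSymm K μ S * (1 - (l : K)⁻¹ • (zCol K μ S a v + xt)) := by
  have hl0 : (l : K) ≠ 0 := Nat.cast_ne_zero.mpr (by omega)
  set c := youngSymm K μ S with hc
  set zv := zCol K μ S a v with hzv
  have hstep : ∀ j ∈ Finset.Ico (v + 1) (v + l), c * zv * zCol K μ S a j = c * zv := by
    intro j hj
    rw [Finset.mem_Ico] at hj
    exact youngSymm_zv_zj hS a ha (by omega) (hblock j (by omega) (by omega))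
  have hmain : c * zv * xt = ((l : K) - 1) • (c * zv) := by
    rw [hxt, Finset.mul_sum, Finset.sum_congr rfl hstep, Finset.sum_const, Nat.card_Ico,
      show v + l - (v + 1) = l - 1 by omega, ← Nat.cast_smul_eq_nsmul K,
      Nat.cast_sub (by omega : 1 ≤ l), Nat.cast_one]
  have e1 : c * (1 - zv) = c - c * zv := by rw [mul_sub, mul_one]
  have e2 : (c - c * zv) * (1 - (l : K)⁻¹ • xt)
      = c - c * zv - (l : K)⁻¹ • (c * xt - (c * zv) * xt) := by
    rw [mul_sub, mul_one, mul_smul_comm, sub_mul]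
  rw [e1, e2, hmain, mul_sub, mul_one, mul_smul_comm, mul_add]
  match_scalars <;> field_simp <;> ring
end

section
/- Let S be a Young tableau of shape μ with entry set A₀, a ∉ A₀, and suppose μ'_v = μ'_{v+1} for a column index v. Set z_j = ∑_{b ∈ C_j(S)} (a,b). Then c_μ(S) · (1 − z_v) · z_j · c_μ(S) = 0 for every column j with v+1 ≤ j and μ'_j = μ'_v lying in the same block as v (i.e., all columns between v and j have length μ'_v). -/
open scoped Classical
open MonoidAlgebra Equiv Finset

set_option linter.unusedSectionVars false
set_option maxHeartbeats 1000000

namespace YSaux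

variable {K : Type*} [Field K] {A : Type*} [Fintype A] [DecidableEq A] {L : Type*}

lemma Perm.inv_apply_self (f : Perm A) (x : A) : f⁻¹ (f x) = x := f.symm_apply_apply x

lemma Perm.apply_inv_self (f : Perm A) (x : A) : f (f⁻¹ x) = x := f.apply_symm_apply x

noncomputable def esum (K : Type*) [Field K] {A : Type*} [Fintype A] [DecidableEq A]
    (G : Finset (Perm A)) : MonoidAlgebra K (Perm A) :=
  ∑ σ ∈ G, MonoidAlgebra.single σ (1 : K)

noncomputable def esgn (K : Type*) [Field K] {A : Type*} [Fintype A] [DecidableEq A]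
    (G : Finset (Perm A)) : MonoidAlgebra K (Perm A) :=
  ∑ σ ∈ G, MonoidAlgebra.single σ ((Perm.sign σ : ℤ) : K)

noncomputable def stab {A : Type*} [Fintype A] [DecidableEq A] (ℓ : A → L) : Finset (Perm A) :=
  Finset.univ.filter (fun σ => ∀ x, ℓ (σ x) = ℓ x)

lemma mem_stab {ℓ : A → L} {σ : Perm A} : σ ∈ stab ℓ ↔ ∀ x, ℓ (σ x) = ℓ x := by
  simp [stab]

lemma one_mem_stab (ℓ : A → L) : (1 : Perm A) ∈ stab ℓ := by simp [mem_stab]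

lemma mul_mem_stab {ℓ : A → L} {σ τ : Perm A} (hσ : σ ∈ stab ℓ) (hτ : τ ∈ stab ℓ) :
    σ * τ ∈ stab ℓ := by
  rw [mem_stab] at *
  intro x; simpa [Perm.mul_apply] using (hσ (τ x)).trans (hτ x)

lemma inv_mem_stab {ℓ : A → L} {σ : Perm A} (hσ : σ ∈ stab ℓ) : σ⁻¹ ∈ stab ℓ := by
  rw [mem_stab] at *
  intro x
  have := hσ (σ⁻¹ x)
  simpa using this.symm

/-- Right-multiplying the signed symmetrizer by a member (with its sign) fixes it. -/
lemma esgn_mul_single {ℓ : A → L} {τ : Perm A} (hτ : τ ∈ stab ℓ) :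
    esgn K (stab ℓ) * MonoidAlgebra.single τ ((Perm.sign τ : ℤ) : K) = esgn K (stab ℓ) := by
  rw [esgn, Finset.sum_mul]
  simp only [MonoidAlgebra.single_mul_single]
  refine Finset.sum_equiv (Equiv.mulRight τ) ?_ ?_
  · intro σ
    constructor
    · intro hσ; simpa using mul_mem_stab hσ hτ
    · intro hσ; simpa using mul_mem_stab hσ (inv_mem_stab hτ)
  · intro σ hσ
    simp only [Equiv.coe_mulRight]
    congr 1
    rw [← Int.cast_mul, ← Units.val_mul, ← map_mul]

lemma single_mul_esum {ℓ : A → L} {τ : Perm A} (hτ : τ ∈ stab ℓ) :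
    MonoidAlgebra.single τ (1 : K) * esum K (stab ℓ) = esum K (stab ℓ) := by
  rw [esum, Finset.mul_sum]
  simp only [MonoidAlgebra.single_mul_single, one_mul]
  refine Finset.sum_equiv (Equiv.mulLeft τ) ?_ ?_
  · intro σ
    constructor
    · intro hσ; simpa using mul_mem_stab hτ hσ
    · intro hσ; simpa using mul_mem_stab (inv_mem_stab hτ) hσ
  · intro σ hσ; simp

/-- Conjugation moves the symmetrizer past a single permutation. -/
lemma single_mul_esum_eq (ℓ : A → L) (π : Perm A) :
    MonoidAlgebra.single π (1 : K) * esum K (stab ℓ) =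
      esum K (stab (fun x => ℓ (π⁻¹ x))) * MonoidAlgebra.single π (1 : K) := by
  rw [esum, esum, Finset.mul_sum, Finset.sum_mul]
  simp only [MonoidAlgebra.single_mul_single, one_mul, mul_one]
  refine Finset.sum_equiv ⟨fun σ => π * σ * π⁻¹, fun σ => π⁻¹ * σ * π, fun σ => by group,
    fun σ => by group⟩ ?_ ?_
  · intro σ
    simp only [Equiv.coe_fn_mk, mem_stab]
    constructor
    · intro h x
      simp only [Perm.mul_apply, Perm.inv_apply_self]
      exact h _
    · intro h x
      have := h (π x)
      simpa [Perm.mul_apply, Perm.inv_apply_self] using this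
  · intro σ hσ
    simp only [Equiv.coe_fn_mk]
    congr 1
    group

/-- Common-transposition vanishing: if `t` is a transposition lying in both stabilizers,
then `esgn * esum = 0`. -/
lemma esgn_mul_esum_eq_zero [CharZero K] {ℓ₁ : A → L} {L' : Type*} {ℓ₂ : A → L'}
    {x y : A} (hxy : x ≠ y) (h1 : Equiv.swap x y ∈ stab ℓ₁) (h2 : Equiv.swap x y ∈ stab ℓ₂) :
    esgn K (stab ℓ₁) * esum K (stab ℓ₂) = 0 := by
  set t := Equiv.swap x y with ht
  have hsgn : ((Perm.sign t : ℤ) : K) = -1 := by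
    rw [ht, Perm.sign_swap hxy]; norm_num
  have h1' : esgn K (stab ℓ₁) * MonoidAlgebra.single t (1 : K) = - esgn K (stab ℓ₁) := by
    have := esgn_mul_single (K := K) h1
    rw [hsgn] at this
    have h2 : MonoidAlgebra.single t (-1 : K) = - MonoidAlgebra.single t (1 : K) :=
      MonoidAlgebra.single_neg t (1 : K)
    rw [h2, mul_neg] at this
    exact neg_eq_iff_eq_neg.mp this
  have h2' : MonoidAlgebra.single t (1 : K) * esum K (stab ℓ₂) = esum K (stab ℓ₂) :=
    single_mul_esum h2
  have key : esgn K (stab ℓ₁) * esum K (stab ℓ₂) = - (esgn K (stab ℓ₁) * esum K (stab ℓ₂)) := by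
    calc esgn K (stab ℓ₁) * esum K (stab ℓ₂)
        = esgn K (stab ℓ₁) * (MonoidAlgebra.single t (1 : K) * esum K (stab ℓ₂)) := by rw [h2']
      _ = (esgn K (stab ℓ₁) * MonoidAlgebra.single t (1 : K)) * esum K (stab ℓ₂) :=
          (mul_assoc _ _ _).symm
      _ = - (esgn K (stab ℓ₁) * esum K (stab ℓ₂)) := by rw [h1', neg_mul]
  have hXX : esgn K (stab ℓ₁) * esum K (stab ℓ₂) + esgn K (stab ℓ₁) * esum K (stab ℓ₂) = 0 :=
    add_eq_zero_iff_eq_neg.mpr key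
  have h2s : (2 : K) • (esgn K (stab ℓ₁) * esum K (stab ℓ₂)) = 0 := by
    rw [two_smul]; exact hXX
  have h2ne : (2 : K) ≠ 0 := two_ne_zero
  exact (smul_eq_zero.mp h2s).resolve_left h2ne

lemma swap_mem_stab {ℓ : A → L} {x y : A} (h : ℓ x = ℓ y) : Equiv.swap x y ∈ stab ℓ := by
  rw [mem_stab]
  intro z
  rcases eq_or_ne z x with rfl | hzx
  · rw [Equiv.swap_apply_left]; exact h.symm
  rcases eq_or_ne z y with rfl | hzy
  · rw [Equiv.swap_apply_right]; exact h
  · rw [Equiv.swap_apply_of_ne_of_ne hzx hzy]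

lemma stab_fix {ℓ : A → L} {a : A} (hunique : ∀ x, ℓ x = ℓ a → x = a) {σ : Perm A}
    (hσ : σ ∈ stab ℓ) : σ a = a :=
  hunique _ (mem_stab.mp hσ a)

/-- Coset decomposition of the enlarged antisymmetrizer. -/
lemma esgn_update (ℓ : A → L) (a : A) (l₀ : L) (hunique : ∀ x, ℓ x = ℓ a → x = a)
    (hne : ℓ a ≠ l₀) :
    esgn K (stab ℓ) *
        (1 - ∑ x ∈ Finset.univ.filter (fun x => ℓ x = l₀),
          MonoidAlgebra.single (Equiv.swap a x) (1 : K)) =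
      esgn K (stab (Function.update ℓ a l₀)) := by
  set ℓ' := Function.update ℓ a l₀ with hℓ'
  set F := Finset.univ.filter (fun x => ℓ x = l₀) with hF
  have haF : a ∉ F := by simp [hF, hne]
  have hxa : ∀ x ∈ F, x ≠ a := by
    intro x hx
    rintro rfl
    exact haF hx
  have hℓ'a : ℓ' a = l₀ := Function.update_self a l₀ ℓ
  have hℓ'x : ∀ x, x ≠ a → ℓ' x = ℓ x := fun x hx => Function.update_of_ne hx l₀ ℓ
  -- members of `stab ℓ` lie in `stab ℓ'`
  have hsub : ∀ σ ∈ stab ℓ, σ ∈ stab ℓ' := by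
    intro σ hσ
    have hfix := stab_fix hunique hσ
    rw [mem_stab]
    intro x
    rcases eq_or_ne x a with rfl | hxa'
    · rw [hfix]
    · have hσx : σ x ≠ a := fun h => hxa' (by simpa [hfix] using σ.injective (h.trans hfix.symm))
      rw [hℓ'x _ hσx, hℓ'x _ hxa', mem_stab.mp hσ]
  have hback : ∀ τ ∈ stab ℓ', τ a = a → τ ∈ stab ℓ := by
    intro τ hτ hfix
    rw [mem_stab]
    intro x
    rcases eq_or_ne x a with rfl | hxa'
    · rw [hfix]
    · have hτx : τ x ≠ a := fun h => hxa' (by simpa [hfix] using τ.injective (h.trans hfix.symm))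
      rw [← hℓ'x _ hτx, ← hℓ'x _ hxa', mem_stab.mp hτ]
  have hswapmem : ∀ x ∈ F, Equiv.swap a x ∈ stab ℓ' := by
    intro x hx
    refine swap_mem_stab ?_
    rw [hℓ'a, hℓ'x x (hxa x hx)]
    exact ((Finset.mem_filter.mp hx).2).symm
  -- rewrite the factor `1 - z` as a signed sum over coset representatives
  set R := insert (1 : Perm A) (F.image (fun x => Equiv.swap a x)) with hR
  have himinj : ∀ x ∈ F, ∀ y ∈ F, Equiv.swap a x = Equiv.swap a y → x = y := by
    intro x hx y hy h
    have := congrArg (fun σ : Perm A => σ a) h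
    simpa [Equiv.swap_apply_left] using this
  have hone : (1 : Perm A) ∉ F.image (fun x => Equiv.swap a x) := by
    simp only [Finset.mem_image, not_exists]
    rintro x ⟨hx, hswap⟩
    exact (hxa x hx) ((Equiv.swap_eq_one_iff.mp hswap).symm)
  have hz : (1 : MonoidAlgebra K (Perm A)) -
      ∑ x ∈ F, MonoidAlgebra.single (Equiv.swap a x) (1 : K) =
      ∑ ρ ∈ R, MonoidAlgebra.single ρ ((Perm.sign ρ : ℤ) : K) := by
    rw [hR, Finset.sum_insert hone, Finset.sum_image himinj]
    have h1 : MonoidAlgebra.single (1 : Perm A) (((Perm.sign (1 : Perm A) : ℤ)) : K) =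
        (1 : MonoidAlgebra K (Perm A)) := by
      simp [MonoidAlgebra.one_def]
    have hterm : ∀ x ∈ F, MonoidAlgebra.single (Equiv.swap a x)
        ((Perm.sign (Equiv.swap a x) : ℤ) : K) =
        - MonoidAlgebra.single (Equiv.swap a x) (1 : K) := by
      intro x hx
      rw [Perm.sign_swap (Ne.symm (hxa x hx))]
      simp [Finsupp.single_neg]
    rw [h1, Finset.sum_congr rfl hterm, Finset.sum_neg_distrib, ← sub_eq_add_neg]
  rw [hz, esgn, esgn, Finset.sum_mul_sum]
  rw [← Finset.sum_product']
  refine Finset.sum_nbij' (fun p => p.1 * p.2)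
    (fun τ => if τ⁻¹ a = a then (τ, 1) else (τ * Equiv.swap a (τ⁻¹ a), Equiv.swap a (τ⁻¹ a)))
    ?_ ?_ ?_ ?_ ?_
  · rintro ⟨σ, ρ⟩ hp
    rw [Finset.mem_product] at hp
    obtain ⟨hσ, hρ⟩ := hp
    refine mul_mem_stab (hsub σ hσ) ?_
    rw [hR, Finset.mem_insert] at hρ
    rcases hρ with rfl | hρ
    · exact one_mem_stab ℓ'
    · obtain ⟨x, hx, rfl⟩ := Finset.mem_image.mp hρ
      exact hswapmem x hx
  · intro τ hτ
    have hx₀ : ℓ' (τ⁻¹ a) = l₀ := by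
      have := mem_stab.mp hτ (τ⁻¹ a)
      rw [Perm.apply_inv_self] at this
      rw [← this, hℓ'a]
    split_ifs with h
    · rw [Finset.mem_product]
      refine ⟨hback τ hτ ?_, Finset.mem_insert_self _ _⟩
      have := congrArg τ h
      rw [Perm.apply_inv_self] at this
      exact this.symm
    · have hmemF : τ⁻¹ a ∈ F := by
        rw [hF, Finset.mem_filter]
        exact ⟨Finset.mem_univ _, by rw [← hℓ'x _ h]; exact hx₀⟩
      rw [Finset.mem_product]
      constructor
      · refine hback _ (mul_mem_stab hτ (hswapmem _ hmemF)) ?_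
        simp [Perm.mul_apply, Equiv.swap_apply_left, Perm.apply_inv_self]
      · exact Finset.mem_insert_of_mem (Finset.mem_image_of_mem _ hmemF)
  · rintro ⟨σ, ρ⟩ hp
    rw [Finset.mem_product] at hp
    obtain ⟨hσ, hρ⟩ := hp
    have hfixa : σ a = a := stab_fix hunique hσ
    have hσa : σ⁻¹ a = a := by
      conv_lhs => rw [← hfixa]
      simp
    rw [hR, Finset.mem_insert] at hρ
    rcases hρ with rfl | hρ
    · dsimp only
      simp [hσa]
    · obtain ⟨x, hx, rfl⟩ := Finset.mem_image.mp hρ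
      dsimp only
      have hinv : (σ * Equiv.swap a x)⁻¹ a = x := by
        simp [mul_inv_rev, Perm.mul_apply, hσa, Equiv.swap_apply_left]
      rw [hinv, if_neg (hxa x hx)]
      simp [mul_assoc]
  · intro τ hτ
    split_ifs with h
    · simp
    · simp [mul_assoc]
  · rintro ⟨σ, ρ⟩ hp
    simp only [MonoidAlgebra.single_mul_single]
    congr 1
    rw [← Int.cast_mul, ← Units.val_mul, ← map_mul]

section Tableau

variable (μ : YoungDiagram) (S : μ.cells → A)

noncomputable def lab (p : μ.cells → ℕ) : A → ℕ ⊕ A :=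
  fun x => if h : ∃ c : μ.cells, S c = x then Sum.inl (p h.choose) else Sum.inr x

variable {μ S}

lemma lab_S {p : μ.cells → ℕ} (hS : Function.Injective S) (c : μ.cells) :
    lab μ S p (S c) = Sum.inl (p c) := by
  have h : ∃ c' : μ.cells, S c' = S c := ⟨c, rfl⟩
  rw [lab, dif_pos h]
  exact congrArg _ (congrArg p (hS h.choose_spec))

lemma lab_not {p : μ.cells → ℕ} {x : A} (hx : ∀ c : μ.cells, S c ≠ x) :
    lab μ S p x = Sum.inr x := by
  rw [lab, dif_neg]
  rintro ⟨c, hc⟩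
  exact hx c hc

lemma filter_eq_stab (hS : Function.Injective S) (p : μ.cells → ℕ) :
    (Finset.univ.filter (fun σ : Perm A =>
        (∀ x : A, (∀ c : μ.cells, S c ≠ x) → σ x = x) ∧
        ∀ c : μ.cells, ∃ c' : μ.cells, p c' = p c ∧ σ (S c) = S c')) =
      stab (lab μ S p) := by
  ext σ
  simp only [Finset.mem_filter, Finset.mem_univ, true_and, mem_stab]
  constructor
  · rintro ⟨hout, hin⟩ x
    by_cases h : ∃ c : μ.cells, S c = x
    · obtain ⟨c, rfl⟩ := h
      obtain ⟨c', hc', hσ⟩ := hin c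
      rw [hσ, lab_S hS, lab_S hS, hc']
    · push_neg at h
      rw [hout x h]
  · intro hstab
    constructor
    · intro x hx
      have h1 : lab μ S p (σ x) = Sum.inr x := by rw [hstab, lab_not hx]
      by_cases h : ∃ c : μ.cells, S c = σ x
      · obtain ⟨c, hc⟩ := h
        rw [← hc, lab_S hS] at h1
        exact absurd h1 (by simp)
      · push_neg at h
        rw [lab_not h] at h1
        exact Sum.inr.inj h1
    · intro c
      have h1 : lab μ S p (σ (S c)) = Sum.inl (p c) := by rw [hstab, lab_S hS]
      by_cases h : ∃ c' : μ.cells, S c' = σ (S c)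
      · obtain ⟨c', hc'⟩ := h
        refine ⟨c', ?_, hc'.symm⟩
        rw [← hc', lab_S hS] at h1
        exact Sum.inl.inj h1
      · push_neg at h
        rw [lab_not h] at h1
        exact absurd h1 (by simp)

lemma aRow_eq (hS : Function.Injective S) :
    aRow K μ S = esum K (stab (lab μ S (fun c => (c : ℕ × ℕ).1))) := by
  unfold aRow esum; exact Finset.sum_congr (filter_eq_stab hS _) (fun _ _ => rfl)

lemma bCol_eq (hS : Function.Injective S) :
    bCol K μ S = esgn K (stab (lab μ S (fun c => (c : ℕ × ℕ).2))) := by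
  unfold bCol esgn; exact Finset.sum_congr (filter_eq_stab hS _) (fun _ _ => rfl)

lemma colSet_eq (hS : Function.Injective S) (j : ℕ) :
    colSet μ S j =
      Finset.univ.filter (fun x => lab μ S (fun c => (c : ℕ × ℕ).2) x = Sum.inl j) := by
  ext x
  simp only [colSet, Finset.mem_filter, Finset.mem_univ, true_and]
  constructor
  · rintro ⟨c, hc2, rfl⟩
    rw [lab_S hS, hc2]
  · intro h
    by_cases hin : ∃ c : μ.cells, S c = x
    · obtain ⟨c, rfl⟩ := hin
      rw [lab_S hS] at h
      exact ⟨c, Sum.inl.inj h, rfl⟩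
    · push_neg at hin
      rw [lab_not hin] at h
      exact absurd h (by simp)

end Tableau

end YSaux

/-- if columns `v, v+1, …, j` of `μ` all have the same length (so `j`
lies in the same block as `v`), then `c_μ(S) · (1 − z_v) · z_j · c_μ(S) = 0`. -/
theorem youngSymm_block_vanish (K : Type*) [Field K] [CharZero K] {A : Type*} [Fintype A]
    [DecidableEq A] (μ : YoungDiagram) (S : μ.cells → A) (hS : Function.Injective S)
    (a : A) (ha : ∀ c : μ.cells, S c ≠ a)
    (v j : ℕ) (hj : v + 1 ≤ j) (hpos : 0 < μ.colLen v)
    (hblock : ∀ i, v ≤ i → i ≤ j → μ.colLen i = μ.colLen v) :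
    youngSymm K μ S * (1 - zCol K μ S a v) * zCol K μ S a j * youngSymm K μ S = 0 := by
  classical
  set ℓcol := YSaux.lab μ S (fun c => (c : ℕ × ℕ).2) with hℓcol
  set ℓrow := YSaux.lab μ S (fun c => (c : ℕ × ℕ).1) with hℓrow
  set ℓ' := Function.update ℓcol a (Sum.inl v : ℕ ⊕ A) with hℓ'
  have hacol : ℓcol a = Sum.inr a := YSaux.lab_not ha
  have hunique : ∀ x, ℓcol x = ℓcol a → x = a := by
    intro x hx
    rw [hacol] at hx
    by_cases h : ∃ c : μ.cells, S c = x
    · obtain ⟨c, rfl⟩ := h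
      rw [hℓcol, YSaux.lab_S hS] at hx
      exact absurd hx (by simp)
    · push_neg at h
      rw [hℓcol, YSaux.lab_not h] at hx
      exact Sum.inr.inj hx
  have hne : ℓcol a ≠ Sum.inl v := by rw [hacol]; simp
  have hset : colSet μ S v = @Finset.filter A (fun x => ℓcol x = Sum.inl v)
      (fun x => Classical.propDecidable _) Finset.univ := by
    rw [YSaux.colSet_eq hS v]
    ext x
    simp only [Finset.mem_filter, hℓcol]
  have hcoset : bCol K μ S * (1 - zCol K μ S a v) = YSaux.esgn K (YSaux.stab ℓ') := by
    rw [YSaux.bCol_eq hS, zCol, hset, hℓ']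
    exact YSaux.esgn_update (K := K) ℓcol a (Sum.inl v) hunique hne
  have key : ∀ b ∈ colSet μ S j,
      YSaux.esgn K (YSaux.stab ℓ') *
        (MonoidAlgebra.single (Equiv.swap a b) (1 : K) * aRow K μ S) = 0 := by
    intro b hb
    obtain ⟨c, hc2, hcb⟩ := (Finset.mem_filter.mp hb).2
    have hcj : (c : ℕ × ℕ).1 < μ.colLen j := by
      have h2 : (c : ℕ × ℕ).1 < μ.colLen (c : ℕ × ℕ).2 :=
        YoungDiagram.mem_iff_lt_colLen.mp ((YoungDiagram.mem_cells _).mp c.2)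
      rwa [hc2] at h2
    have hmemv : ((c : ℕ × ℕ).1, v) ∈ μ := by
      rw [YoungDiagram.mem_iff_lt_colLen]
      have := hblock j (by omega) le_rfl
      omega
    set c' : μ.cells := ⟨((c : ℕ × ℕ).1, v), (YoungDiagram.mem_cells _).mpr hmemv⟩ with hc'
    set b' := S c' with hb'
    have hvj : v ≠ j := by omega
    have hcc' : c ≠ c' := by
      intro h
      apply hvj
      rw [h] at hc2
      exact hc2
    have hbb' : b ≠ b' := by
      rw [← hcb, hb']
      exact fun h => hcc' (hS h)
    have hba : b ≠ a := by rw [← hcb]; exact ha c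
    have hb'a : b' ≠ a := ha c'
    have hrowb : ℓrow b = Sum.inl (c : ℕ × ℕ).1 := by
      rw [← hcb, hℓrow]; exact YSaux.lab_S hS c
    have hrowb' : ℓrow b' = Sum.inl (c : ℕ × ℕ).1 := by
      rw [hb', hℓrow]; exact YSaux.lab_S hS c'
    have hcolb' : ℓcol b' = Sum.inl v := by
      rw [hb', hℓcol]; exact YSaux.lab_S hS c'
    have hswapa : Equiv.swap b b' a = a :=
      Equiv.swap_apply_of_ne_of_ne (Ne.symm hba) (Ne.symm hb'a)
    have hswap : Equiv.swap a b = Equiv.swap b b' * Equiv.swap a b' * Equiv.swap b b' := by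
      calc Equiv.swap a b
          = Equiv.swap (Equiv.swap b b' a) (Equiv.swap b b' b') := by
            rw [hswapa, Equiv.swap_apply_right]
        _ = Equiv.swap b b' * Equiv.swap a b' * (Equiv.swap b b')⁻¹ :=
            Equiv.swap_apply_apply _ a b'
        _ = Equiv.swap b b' * Equiv.swap a b' * Equiv.swap b b' := by rw [Equiv.swap_inv]
    have hrmem : Equiv.swap b b' ∈ YSaux.stab ℓrow :=
      YSaux.swap_mem_stab (by rw [hrowb, hrowb'])
    have haR : aRow K μ S = YSaux.esum K (YSaux.stab ℓrow) := YSaux.aRow_eq hS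
    set π := Equiv.swap b b' * Equiv.swap a b' with hπ
    have hstep : MonoidAlgebra.single (Equiv.swap a b) (1 : K) * aRow K μ S
        = MonoidAlgebra.single π (1 : K) * aRow K μ S := by
      have hsm : MonoidAlgebra.single (Equiv.swap b b' * Equiv.swap a b' * Equiv.swap b b') (1 : K)
          = MonoidAlgebra.single π (1 : K) * MonoidAlgebra.single (Equiv.swap b b') (1 : K) := by
        rw [MonoidAlgebra.single_mul_single, one_mul, hπ]
      rw [haR, hswap, hsm, mul_assoc, YSaux.single_mul_esum hrmem]
    have hπinva : π⁻¹ a = b' := by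
      rw [hπ, mul_inv_rev, Equiv.swap_inv, Equiv.swap_inv, Equiv.Perm.mul_apply, hswapa,
        Equiv.swap_apply_left]
    have hπinvb' : π⁻¹ b' = b := by
      rw [hπ, mul_inv_rev, Equiv.swap_inv, Equiv.swap_inv, Equiv.Perm.mul_apply,
        Equiv.swap_apply_right, Equiv.swap_apply_of_ne_of_ne hba hbb']
    have hconj := YSaux.single_mul_esum_eq (K := K) ℓrow π
    have hvan : YSaux.esgn K (YSaux.stab ℓ') *
        YSaux.esum K (YSaux.stab (fun x => ℓrow (π⁻¹ x))) = 0 := by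
      refine YSaux.esgn_mul_esum_eq_zero (x := a) (y := b') (Ne.symm hb'a) ?_ ?_
      · refine YSaux.swap_mem_stab ?_
        rw [hℓ', Function.update_self, Function.update_of_ne hb'a, hcolb']
      · refine YSaux.swap_mem_stab ?_
        show ℓrow (π⁻¹ a) = ℓrow (π⁻¹ b')
        rw [hπinva, hπinvb', hrowb', hrowb]
    rw [hstep, haR, hconj, ← mul_assoc, hvan, zero_mul]
  have hmid : YSaux.esgn K (YSaux.stab ℓ') * (zCol K μ S a j * aRow K μ S) = 0 := by
    rw [zCol, Finset.sum_mul, Finset.mul_sum]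
    exact Finset.sum_eq_zero fun b hb => key b hb
  rw [youngSymm]
  have hA : aRow K μ S * bCol K μ S * (1 - zCol K μ S a v) * zCol K μ S a j *
        (aRow K μ S * bCol K μ S)
      = aRow K μ S * ((bCol K μ S * (1 - zCol K μ S a v)) *
        (zCol K μ S a j * aRow K μ S) * bCol K μ S) := by
    simp only [mul_assoc]
  rw [hA, hcoset, hmid, zero_mul, mul_zero]
end
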